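/- arXiv:1912.04350 — 6 statements merged into one kernel-verified Lean document; each statement's English description precedes it below -/
import Mathlib

section
/- The homomorphism R from the Artin group ⟨x, y ∣ (xy)^n = (yx)^n⟩ to the free abelian group ℤ² sending x and y to the two standard generators is surjective, and its kernel is a free group. -/
/-- The even dihedral Artin group with label `2n`:
`⟨x, y ∣ (x*y)^n = (y*x)^n⟩`, with `x = FreeGroup.of true`, `y = FreeGroup.of false`. -/
abbrev EvenDihedralArtin (n : ℕ) : Type :=
  PresentedGroup
    ({(FreeGroup.of true * FreeGroup.of false) ^ n *
        ((FreeGroup.of false * FreeGroup.of true) ^ n)⁻¹} : Set (FreeGroup Bool))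

/-!
Sending `x ↦ s₀` and `y ↦ s₀⁻¹ t` defines a homomorphism from the Artin group to
`F(ℤ/n) ⋊ ℤ`, where the generator `t` of `ℤ` shifts the free basis `sᵢ ↦ sᵢ₊₁`: the relation
holds because `xy ↦ t` and `tⁿ` fixes `s₀`. It has the left inverse `sᵢ ↦ (xy)ⁱ x (xy)⁻ⁱ`,
`t ↦ xy`, which is well defined because `(xy)ⁿ` commutes with `x`. The second coordinate of `R`
is the projection to `ℤ` under this embedding, so `ker R` embeds in `F(ℤ/n)` and is free by
Nielsen–Schreier.
-/

universe u

theorem IsFreeGroup.of_injective {G H : Type u} [Group G] [Group H] [IsFreeGroup H] (f : G →* H)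
    (hf : Function.Injective f) : IsFreeGroup G :=
  IsFreeGroup.ofMulEquiv (MonoidHom.ofInjective hf).symm

theorem mul_pow_eq_mul_pow_swap_iff_commute {G : Type*} [Group G] (a b : G) (n : ℕ) :
    (a * b) ^ n = (b * a) ^ n ↔ Commute a ((a * b) ^ n) := by
  have h : a * (b * a) ^ n = (a * b) ^ n * a := SemiconjBy.pow_right (mul_assoc a b a).symm n
  rw [Commute, SemiconjBy, ← h, mul_right_inj, eq_comm]

namespace SemidirectProduct

variable {N G H : Type u} [Group N] [Group G] [Group H] {φ : G →* MulAut N}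

theorem isFreeGroup_of_le_ker_rightHom [IsFreeGroup N] (f : H →* N ⋊[φ] G)
    (hf : Function.Injective f) {K : Subgroup H} (hK : K ≤ (rightHom.comp f).ker) :
    IsFreeGroup K := by
  have hK' : ∀ k : K, f k ∈ (inl : N →* N ⋊[φ] G).range := fun k => by
    rw [range_inl_eq_ker_rightHom]
    exact hK k.2
  let e : (inl : N →* N ⋊[φ] G).range ≃* N := (MonoidHom.ofInjective inl_injective).symm
  let g : K →* (inl : N →* N ⋊[φ] G).range := (f.comp K.subtype).codRestrict _ hK'
  have hg : Function.Injective g := fun a b h => Subtype.ext (hf (congrArg Subtype.val h))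
  exact IsFreeGroup.of_injective (e.toMonoidHom.comp g) (e.injective.comp hg)

end SemidirectProduct

namespace FreeGroup

def shift (n : ℕ) : Multiplicative ℤ →* MulAut (FreeGroup (ZMod n)) where
  toFun k := freeGroupCongr (Equiv.addLeft (k.toAdd : ZMod n))
  map_one' := MulEquiv.toMonoidHom_injective <| ext_hom _ _ fun i => by simp [freeGroupCongr]
  map_mul' k l := MulEquiv.toMonoidHom_injective <| ext_hom _ _ fun i => by
    simp [freeGroupCongr, add_assoc]

theorem shift_of (n : ℕ) (k : Multiplicative ℤ) (i : ZMod n) :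
    shift n k (of i) = of (k.toAdd + i) := by
  simp [shift, freeGroupCongr]

end FreeGroup

namespace EvenDihedralArtin

open SemidirectProduct

variable {n : ℕ}

def x : EvenDihedralArtin n := PresentedGroup.of true

def y : EvenDihedralArtin n := PresentedGroup.of false

section UniversalProperty

variable {G : Type*} [Group G]

theorem hom_ext {f g : EvenDihedralArtin n →* G} (hx : f x = g x) (hy : f y = g y) : f = g :=
  PresentedGroup.ext fun b => b.casesOn hy hx

def lift (a b : G) (h : (a * b) ^ n = (b * a) ^ n) : EvenDihedralArtin n →* G :=
  PresentedGroup.toGroup (f := fun i => cond i a b) <| by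
    rintro r rfl
    simpa [mul_inv_eq_one] using h

variable {a b : G} {h : (a * b) ^ n = (b * a) ^ n}

@[simp]
theorem lift_x : lift a b h x = a :=
  PresentedGroup.toGroup.of _

@[simp]
theorem lift_y : lift a b h y = b :=
  PresentedGroup.toGroup.of _

end UniversalProperty

theorem x_mul_y_pow_eq : ((x : EvenDihedralArtin n) * y) ^ n = (y * x) ^ n := by
  have h := PresentedGroup.mk_eq_mk_of_mul_inv_mem (Set.mem_singleton
    ((FreeGroup.of true * FreeGroup.of false) ^ n * ((FreeGroup.of false * FreeGroup.of true) ^ n)⁻¹))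
  simp only [map_mul, map_pow] at h
  exact h

theorem commute_x_x_mul_y_zpow_natCast_mul (t : ℤ) :
    Commute (x : EvenDihedralArtin n) ((x * y) ^ ((n : ℤ) * t)) := by
  rw [zpow_mul, zpow_natCast]
  exact (((mul_pow_eq_mul_pow_swap_iff_commute _ _ n).mp x_mul_y_pow_eq).zpow_right t)

def conjX (m : ℤ) : EvenDihedralArtin n := MulAut.conj ((x * y) ^ m) x

theorem conj_conjX (k m : ℤ) : MulAut.conj ((x * y) ^ k) (conjX m : EvenDihedralArtin n) =
    conjX (k + m) := by
  rw [conjX, conjX, zpow_add, map_mul, MulAut.mul_apply]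

theorem conjX_eq_of_intCast_eq {m m' : ℤ} (h : (m : ZMod n) = m') :
    (conjX m : EvenDihedralArtin n) = conjX m' := by
  obtain ⟨t, ht⟩ := (ZMod.intCast_eq_intCast_iff_dvd_sub m m' n).mp h
  obtain rfl : m' = m + n * t := by linarith
  have hx : conjX (n * t) = (x : EvenDihedralArtin n) :=
    (commute_x_x_mul_y_zpow_natCast_mul t).symm.mul_inv_cancel
  rw [← conj_conjX, hx, conjX]

abbrev FreeSemidirect (n : ℕ) : Type :=
  FreeGroup (ZMod n) ⋊[FreeGroup.shift n] Multiplicative ℤ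

theorem commute_inl_of_zero_inr_pow :
    Commute (inl (FreeGroup.of 0) : FreeSemidirect n) (inr (Multiplicative.ofAdd 1) ^ n) := by
  rw [← map_pow, ← ofAdd_nsmul]
  ext <;> simp [FreeGroup.shift_of]

def toFreeSemidirect : EvenDihedralArtin n →* FreeSemidirect n :=
  lift (inl (FreeGroup.of 0)) ((inl (FreeGroup.of 0))⁻¹ * inr (Multiplicative.ofAdd 1)) <| by
    rw [mul_pow_eq_mul_pow_swap_iff_commute, mul_inv_cancel_left]
    exact commute_inl_of_zero_inr_pow

def ofFreeSemidirect : FreeSemidirect n →* EvenDihedralArtin n :=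
  SemidirectProduct.lift (FreeGroup.lift fun i => conjX (i.cast : ℤ)) (zpowersHom _ (x * y))
    fun k => FreeGroup.ext_hom _ _ fun i => by
      simp only [MonoidHom.comp_apply, MulEquiv.coe_toMonoidHom, FreeGroup.shift_of,
        FreeGroup.lift_apply_of, zpowersHom_apply, conj_conjX]
      apply conjX_eq_of_intCast_eq
      simp

theorem ofFreeSemidirect_comp_toFreeSemidirect :
    ofFreeSemidirect.comp toFreeSemidirect = MonoidHom.id (EvenDihedralArtin n) := by
  apply hom_ext <;> simp [toFreeSemidirect, ofFreeSemidirect, conjX]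

theorem toFreeSemidirect_injective :
    Function.Injective (toFreeSemidirect : EvenDihedralArtin n →* FreeSemidirect n) :=
  Function.LeftInverse.injective (g := ofFreeSemidirect)
    (DFunLike.congr_fun ofFreeSemidirect_comp_toFreeSemidirect)

section ToZSq

variable (R : EvenDihedralArtin n →* Multiplicative (ℤ × ℤ))
  (hx : R x = Multiplicative.ofAdd (1, 0)) (hy : R y = Multiplicative.ofAdd (0, 1))
include hx hy

theorem surjective_of_map_x_of_map_y : Function.Surjective R := by
  intro g
  refine ⟨x ^ g.toAdd.1 * y ^ g.toAdd.2, ?_⟩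
  simp [hx, hy, ← ofAdd_zsmul, ← ofAdd_add]

theorem ker_le_ker_rightHom_comp_toFreeSemidirect :
    R.ker ≤ (rightHom.comp toFreeSemidirect).ker := by
  have h : rightHom.comp toFreeSemidirect = (AddMonoidHom.snd ℤ ℤ).toMultiplicative.comp R := by
    apply hom_ext <;> simp [toFreeSemidirect, hx, hy]
  intro g hg
  rw [MonoidHom.mem_ker, h, MonoidHom.comp_apply, hg, map_one]

end ToZSq

end EvenDihedralArtin

open EvenDihedralArtin in
theorem evenDihedralArtin_to_zsq_surjective_and_ker_free_general (n : ℕ)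
    (R : EvenDihedralArtin n →* Multiplicative (ℤ × ℤ))
    (hx : R (PresentedGroup.of true) = Multiplicative.ofAdd (1, 0))
    (hy : R (PresentedGroup.of false) = Multiplicative.ofAdd (0, 1)) :
    Function.Surjective R ∧ IsFreeGroup R.ker :=
  ⟨surjective_of_map_x_of_map_y R hx hy,
    SemidirectProduct.isFreeGroup_of_le_ker_rightHom _ toFreeSemidirect_injective
      (ker_le_ker_rightHom_comp_toFreeSemidirect R hx hy)⟩

/-- The homomorphism `R` from the Artin group `⟨x, y ∣ (xy)^n = (yx)^n⟩` to the
free abelian group `ℤ²` sending `x` and `y` to the two standard generators is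
surjective, and its kernel is a free group. -/
theorem evenDihedralArtin_to_zsq_surjective_and_ker_free (n : ℕ) (hn : 1 ≤ n)
    (R : EvenDihedralArtin n →* Multiplicative (ℤ × ℤ))
    (hx : R (PresentedGroup.of true) = Multiplicative.ofAdd (1, 0))
    (hy : R (PresentedGroup.of false) = Multiplicative.ofAdd (0, 1)) :
    Function.Surjective R ∧ IsFreeGroup R.ker :=
  evenDihedralArtin_to_zsq_surjective_and_ker_free_general n R hx hy
end

section
/- Let {G_i}_{i ∈ I} be a family of normally poly-free groups each of normally poly-free length at most n. Then the free product ∗_{i ∈ I} G_i is a normally poly-free group of length at most n. -/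
universe u v

/-- Poly-free with a subnormal chain of length `n` (length at most `n`,
since successive subgroups may coincide): there is a chain
`1 = G₀ ⊴ G₁ ⊴ ⋯ ⊴ Gₙ = G` with each quotient `Gᵢ₊₁/Gᵢ` a free group. -/
def IsPolyFreeOfLen : ℕ → (G : Type u) → [Group G] → Prop
  | 0, G, _ => Subsingleton G
  | n + 1, G, _ => ∃ (N : Subgroup G) (_ : N.Normal),
      IsPolyFreeOfLen n N ∧ IsFreeGroup (G ⧸ N)

/-- A group is poly-free if it admits a subnormal chain with free quotients. -/
def IsPolyFree (G : Type u) [Group G] : Prop := ∃ n, IsPolyFreeOfLen n G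

/-- Normally poly-free with a chain of length `n`: a chain
`1 = G₀ ≤ G₁ ≤ ⋯ ≤ Gₙ = G` with every `Gᵢ` normal in `G` and every quotient
`Gᵢ₊₁/Gᵢ` a free group (expressed via a surjection onto a free group whose
kernel is the previous term). -/
def IsNormallyPolyFreeOfLen (n : ℕ) (G : Type u) [Group G] : Prop :=
  ∃ c : Fin (n + 1) → Subgroup G,
    c 0 = ⊥ ∧ c (Fin.last n) = ⊤ ∧ (∀ i : Fin n, c i.castSucc ≤ c i.succ) ∧
    (∀ i, (c i).Normal) ∧
    ∀ i : Fin n, ∃ (F : Type u) (_ : Group F) (f : ↥(c i.succ) →* F),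
      IsFreeGroup F ∧ Function.Surjective f ∧
      f.ker = (c i.castSucc).subgroupOf (c i.succ)

/-- A group is normally poly-free if it admits such a chain of some length. -/
def IsNormallyPolyFree (G : Type u) [Group G] : Prop :=
  ∃ n, IsNormallyPolyFreeOfLen n G


/-!
Write `cᵢ` for a normal chain of `Gᵢ` with free factors and let `Nₖ` be the kernel of
`∗ᵢ Gᵢ → ∗ᵢ (Gᵢ ⧸ cᵢ k)`. The `Nₖ` form a normal chain of `∗ᵢ Gᵢ` from `⊥` to `⊤`, and
`Nₖ₊₁ ⧸ Nₖ` is the kernel of `∗ᵢ (Gᵢ ⧸ cᵢ k) → ∗ᵢ (Gᵢ ⧸ cᵢ (k + 1))`, a free product of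
surjections whose kernels `cᵢ (k + 1) ⧸ cᵢ k` are free.

The kernel of a free product of surjections `fᵢ : Hᵢ → Xᵢ` with free kernels `Kᵢ` is free (a
special case of the Kurosh subgroup theorem). Lifting reduced words of `∗ᵢ Xᵢ` letter by letter
along sections `sᵢ` with `sᵢ 1 = 1` gives a Schreier transversal `σ`, and the kernel is the free
product of the conjugates `σ(w)⁻¹ Kᵢ σ(w)`, `w` running over the reduced words not starting in
`Xᵢ`. These conjugates generate the kernel, and Reidemeister–Schreier rewriting, a homomorphism
from `∗ᵢ Hᵢ` to a semidirect product `(Words → ∗ Kᵢ) ⋊ ∗ᵢ Xᵢ`, inverts the map on them.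
-/

open Function

namespace MonoidHom

variable {G K : Type*} [Group G] [Group K] [DecidableEq K] {φ : G →* K}

noncomputable def surjSection (hφ : Surjective φ) (x : K) : G :=
  if x = 1 then 1 else surjInv hφ x

@[simp] theorem apply_surjSection (hφ : Surjective φ) (x : K) : φ (surjSection hφ x) = x := by
  unfold surjSection
  split_ifs with hx
  · rw [map_one, hx]
  · exact surjInv_eq hφ x

@[simp] theorem surjSection_one (hφ : Surjective φ) : surjSection hφ 1 = 1 := if_pos rfl

end MonoidHom

namespace Monoid.CoprodI

instance {ι : Type*} {M : ι → Type*} [∀ i, Monoid (M i)] [∀ i, Subsingleton (M i)] :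
    Subsingleton (CoprodI M) := by
  suffices h : ∀ a : CoprodI M, a = 1 from ⟨fun a b => (h a).trans (h b).symm⟩
  intro a
  induction a using induction_on with
  | one => rfl
  | of i m => rw [Subsingleton.elim m 1, map_one]
  | mul x y hx hy => rw [hx, hy, mul_one]

theorem Word.prod_smul_empty {ι : Type*} {M : ι → Type*} [∀ i, Monoid (M i)] [DecidableEq ι]
    [∀ i, DecidableEq (M i)] (w : Word M) : w.prod • Word.empty = w :=
  Word.equiv.apply_symm_apply w

variable {ι : Type*} {H X : ι → Type*} [∀ i, Group (H i)] [∀ i, Group (X i)]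

def map (f : ∀ i, H i →* X i) : CoprodI H →* CoprodI X :=
  lift fun i => of.comp (f i)

@[simp] theorem map_of (f : ∀ i, H i →* X i) {i : ι} (h : H i) : map f (of h) = of (f i h) :=
  lift_of _ _

theorem map_comp {Y : ι → Type*} [∀ i, Group (Y i)] (g : ∀ i, X i →* Y i)
    (f : ∀ i, H i →* X i) : map (fun i => (g i).comp (f i)) = (map g).comp (map f) :=
  ext_hom _ _ fun i => by ext; simp

theorem map_surjective {f : ∀ i, H i →* X i} (hf : ∀ i, Surjective (f i)) :
    Surjective (map f) := by
  intro x
  induction x using induction_on with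
  | one => exact ⟨1, map_one _⟩
  | of i m =>
    obtain ⟨h, rfl⟩ := hf i m
    exact ⟨of h, map_of f h⟩
  | mul x y hx hy =>
    obtain ⟨a, rfl⟩ := hx
    obtain ⟨b, rfl⟩ := hy
    exact ⟨a * b, map_mul _ a b⟩

theorem map_injective_of_bijective {f : ∀ i, H i →* X i} (hf : ∀ i, Bijective (f i)) :
    Injective (map f) := by
  let e i := MulEquiv.ofBijective (f i) (hf i)
  have hid : map (fun i => (e i).symm.toMonoidHom.comp (f i)) = MonoidHom.id _ :=
    ext_hom _ _ fun i => by ext h; exact congr_arg of ((e i).symm_apply_apply h)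
  refine LeftInverse.injective (g := map fun i => (e i).symm.toMonoidHom) fun g => ?_
  rw [← MonoidHom.comp_apply, ← map_comp, hid, MonoidHom.id_apply]

section Kurosh

open Word MonoidHom

variable [∀ i, DecidableEq (X i)] {f : ∀ i, H i →* X i} (hf : ∀ i, Surjective (f i))

noncomputable def liftWord (w : Word X) : CoprodI H :=
  (w.toList.map fun z => of (surjSection (hf z.1) z.2)).prod

@[simp] theorem liftWord_empty : liftWord hf (empty : Word X) = 1 := rfl

theorem liftWord_cons {i : ι} (m : X i) (w : Word X) (hmw : w.fstIdx ≠ some i) (hm : m ≠ 1) :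
    liftWord hf (cons m w hmw hm) = of (surjSection (hf i) m) * liftWord hf w := by
  simp [liftWord, cons]

theorem liftWord_rcons {i : ι} (p : Pair X i) :
    liftWord hf (rcons p) = of (surjSection (hf i) p.head) * liftWord hf p.tail := by
  by_cases hp : p.head = 1
  · simp [rcons, hp]
  · simp [rcons, hp, liftWord]

theorem map_liftWord (w : Word X) : map f (liftWord hf w) = w.prod := by
  simp [liftWord, Word.prod, map_list_prod, Function.comp_def]

variable (X) in
abbrev KerIndex : Type _ := Σ i, {w : Word X // w.fstIdx ≠ some i}

variable (f) in
abbrev KerFactors : Type _ := CoprodI fun p : KerIndex X => (f p.1).ker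

abbrev Word.Pair.tailIndex {i : ι} (p : Pair X i) : KerIndex X := ⟨i, p.tail, p.fstIdx_ne⟩

/-- The Schreier generator `σ(b t)⁻¹ h σ((f h)⁻¹ b t)`, for a word `t` not starting in `Xᵢ`,
with the common factor `σ(t)` stripped off. -/
noncomputable def kerLetter {i : ι} (b : X i) (h : H i) : (f i).ker :=
  ⟨(surjSection (hf i) b)⁻¹ * h * surjSection (hf i) ((f i h)⁻¹ * b), by simp⟩

theorem kerLetter_mul {i : ι} (b : X i) (h₁ h₂ : H i) :
    kerLetter hf b (h₁ * h₂) = kerLetter hf b h₁ * kerLetter hf ((f i h₁)⁻¹ * b) h₂ := by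
  ext
  simp [kerLetter, mul_assoc]

noncomputable def ofKerFactors : KerFactors f →* CoprodI H :=
  lift fun p => (MulAut.conj (liftWord hf p.2.1)⁻¹).toMonoidHom.comp (of.comp (f p.1).ker.subtype)

theorem ofKerFactors_of (p : KerIndex X) (k : (f p.1).ker) :
    ofKerFactors hf (of k) = (liftWord hf p.2.1)⁻¹ * of (k : H p.1) * liftWord hf p.2.1 := by
  simp [ofKerFactors]

theorem map_ofKerFactors (d : KerFactors f) : map f (ofKerFactors hf d) = 1 := by
  suffices (map f).comp (ofKerFactors hf) = 1 from congr($this d)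
  refine ext_hom _ _ fun p => MonoidHom.ext fun k => ?_
  simp [ofKerFactors_of, map_liftWord, MonoidHom.mem_ker.1 k.2]

variable [DecidableEq ι]

theorem liftWord_eq_equivPair (i : ι) (w : Word X) :
    liftWord hf w =
      of (surjSection (hf i) (equivPair i w).head) * liftWord hf (equivPair i w).tail := by
  rw [← liftWord_rcons, ← equivPair_symm, Equiv.symm_apply_apply]

theorem liftWord_of_smul {i : ι} (m : X i) (w : Word X) :
    liftWord hf (of m • w) =
      of (surjSection (hf i) (m * (equivPair i w).head)) * liftWord hf (equivPair i w).tail := by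
  rw [of_smul_def, liftWord_rcons]

noncomputable def letterRewrite (i : ι) (h : H i) (w : Word X) : KerFactors f :=
  of (i := (equivPair i w).tailIndex) (kerLetter hf (equivPair i w).head h)

theorem letterRewrite_mul (i : ι) (h₁ h₂ : H i) (w : Word X) :
    letterRewrite hf i (h₁ * h₂) w =
      letterRewrite hf i h₁ w * letterRewrite hf i h₂ ((of (f i h₁))⁻¹ • w) := by
  rw [← map_inv, letterRewrite, letterRewrite, letterRewrite, equivPair_smul_same]
  exact (congrArg (of (i := (equivPair i w).tailIndex)) (kerLetter_mul hf _ h₁ h₂)).trans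
    (map_mul _ _ _)

theorem letterRewrite_of_fstIdx_ne {i : ι} {w : Word X} (hw : w.fstIdx ≠ some i)
    (k : (f i).ker) : letterRewrite hf i k w = of (i := (⟨i, w, hw⟩ : KerIndex X)) k := by
  rw [letterRewrite, equivPair_eq_of_fstIdx_ne hw]
  congr 1
  ext
  simp [kerLetter, MonoidHom.mem_ker.1 k.2]

attribute [local instance] arrowAction arrowMulDistribMulAction

variable (f) in
/-- Functions on the cosets `Word X`, acted on by translation `(t • F) w = F (t⁻¹ • w)`. -/
abbrev Rewriting : Type _ :=
  (Word X → KerFactors f) ⋊[MulDistribMulAction.toMulAut (CoprodI X) _] CoprodI X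

theorem Rewriting.mul_left (a b : Rewriting f) (w : Word X) :
    (a * b).left w = a.left w * b.left (a.right⁻¹ • w) := rfl

noncomputable def rewriting : CoprodI H →* Rewriting f :=
  lift fun i => MonoidHom.mk' (fun h => ⟨letterRewrite hf i h, of (f i h)⟩) fun h₁ h₂ =>
    SemidirectProduct.ext (funext fun w => letterRewrite_mul hf i h₁ h₂ w) (by simp)

@[simp] theorem rewriting_of_left {i : ι} (h : H i) (w : Word X) :
    (rewriting hf (of h)).left w = letterRewrite hf i h w := by
  simp [rewriting]

theorem rewriting_right (g : CoprodI H) : (rewriting hf g).right = map f g := by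
  suffices SemidirectProduct.rightHom.comp (rewriting hf) = map f from congr($this g)
  exact ext_hom _ _ fun i => by ext; simp [rewriting]

theorem rewriting_mul_left (g₁ g₂ : CoprodI H) (w : Word X) :
    (rewriting hf (g₁ * g₂)).left w =
      (rewriting hf g₁).left w * (rewriting hf g₂).left ((map f g₁)⁻¹ • w) := by
  rw [map_mul, Rewriting.mul_left, rewriting_right]

theorem rewriting_liftWord_left (w : Word X) : (rewriting hf (liftWord hf w)).left w = 1 := by
  induction w using consRecOn with
  | empty => rfl
  | cons i m w hmw hm ih =>
    rw [liftWord_cons, rewriting_mul_left, map_of, apply_surjSection, cons_eq_smul,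
      inv_smul_smul, ih, mul_one, rewriting_of_left, letterRewrite, equivPair_smul_same,
      equivPair_eq_of_fstIdx_ne hmw]
    simp only [kerLetter, inv_mul_cancel, apply_surjSection, mul_one, surjSection_one]
    exact map_one _

theorem rewriting_liftWord_inv_left (w : Word X) :
    (rewriting hf (liftWord hf w)⁻¹).left empty = 1 := by
  have h := rewriting_mul_left hf (liftWord hf w)⁻¹ (liftWord hf w) empty
  rwa [inv_mul_cancel, map_one, map_inv (map f), inv_inv, map_liftWord, prod_smul_empty,
    rewriting_liftWord_left, mul_one, eq_comm] at h

theorem ofKerFactors_letterRewrite {i : ι} (h : H i) (w : Word X) :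
    ofKerFactors hf (letterRewrite hf i h w) =
      (liftWord hf w)⁻¹ * of h * liftWord hf ((of (f i h))⁻¹ • w) := by
  rw [letterRewrite, ofKerFactors_of, ← map_inv, liftWord_of_smul, liftWord_eq_equivPair hf i w]
  simp [kerLetter, mul_assoc]

theorem ofKerFactors_rewriting_left (g : CoprodI H) (w : Word X) :
    ofKerFactors hf ((rewriting hf g).left w) =
      (liftWord hf w)⁻¹ * g * liftWord hf ((map f g)⁻¹ • w) := by
  induction g using induction_on generalizing w with
  | one => simp
  | of i h => simp [ofKerFactors_letterRewrite]
  | mul g₁ g₂ ih₁ ih₂ =>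
    rw [rewriting_mul_left, map_mul, ih₁, ih₂, map_mul, mul_inv_rev, mul_smul]
    group

theorem rewriting_ofKerFactors_left (d : KerFactors f) :
    (rewriting hf (ofKerFactors hf d)).left empty = d := by
  let lam : KerFactors f →* KerFactors f :=
    MonoidHom.mk' (fun d => (rewriting hf (ofKerFactors hf d)).left empty) fun d₁ d₂ => by
      rw [map_mul, rewriting_mul_left, map_ofKerFactors, inv_one, one_smul]
  suffices lam = MonoidHom.id _ from congr($this d)
  refine ext_hom _ _ fun ⟨i, w, hw⟩ => MonoidHom.ext fun (k : (f i).ker) => ?_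
  have hk : map f (of k.1) = 1 := by rw [map_of, MonoidHom.mem_ker.1 k.2, map_one]
  change (rewriting hf (ofKerFactors hf (of (i := (⟨i, w, hw⟩ : KerIndex X)) k))).left empty =
    of (i := (⟨i, w, hw⟩ : KerIndex X)) k
  rw [ofKerFactors_of, rewriting_mul_left, rewriting_mul_left, map_mul, hk, mul_one,
    map_inv (map f), inv_inv, map_liftWord, prod_smul_empty, rewriting_liftWord_left,
    rewriting_liftWord_inv_left, rewriting_of_left, letterRewrite_of_fstIdx_ne hf hw, one_mul,
    mul_one]

theorem ofKerFactors_injective : Injective (ofKerFactors hf) :=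
  LeftInverse.injective (g := fun g => (rewriting hf g).left empty)
    (rewriting_ofKerFactors_left hf)

theorem range_ofKerFactors : (ofKerFactors hf).range = (map f).ker := by
  refine le_antisymm ?_ fun g hg => ⟨(rewriting hf g).left empty, ?_⟩
  · rintro _ ⟨d, rfl⟩
    exact map_ofKerFactors hf d
  · rw [ofKerFactors_rewriting_left, MonoidHom.mem_ker.1 hg, inv_one, one_smul, liftWord_empty,
      inv_one, one_mul, mul_one]

end Kurosh

theorem isFreeGroup_ker_map {f : ∀ i, H i →* X i} (hf : ∀ i, Surjective (f i))
    (hK : ∀ i, IsFreeGroup (f i).ker) : IsFreeGroup (map f).ker := by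
  classical
  exact IsFreeGroup.ofMulEquiv ((MonoidHom.ofInjective (ofKerFactors_injective hf)).trans
    (MulEquiv.subgroupCongr (range_ofKerFactors hf)))

end Monoid.CoprodI

def HasFreeQuotient {G : Type u} [Group G] (N M : Subgroup G) : Prop :=
  ∃ (F : Type u) (_ : Group F) (f : M →* F), IsFreeGroup F ∧ Surjective f ∧ f.ker = N.subgroupOf M

theorem hasFreeQuotient_ker_comp {G A : Type u} {B : Type*} [Group G] [Group A] [Group B]
    {φ : G →* A} (hφ : Surjective φ) (ψ : A →* B) [IsFreeGroup ψ.ker] :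
    HasFreeQuotient φ.ker (ψ.comp φ).ker := by
  refine ⟨ψ.ker, inferInstance,
    (φ.domRestrict _).codRestrict ψ.ker fun x => MonoidHom.mem_ker.2 (MonoidHom.mem_ker.1 x.2),
    inferInstance, ?_, by rw [MonoidHom.ker_codRestrict, MonoidHom.ker_domRestrict]⟩
  rintro ⟨y, hy⟩
  obtain ⟨x, rfl⟩ := hφ y
  exact ⟨⟨x, hy⟩, rfl⟩

namespace QuotientGroup

variable {G : Type*} [Group G] {N M : Subgroup G} [N.Normal] [M.Normal]

def mapOfLE (hNM : N ≤ M) : G ⧸ N →* G ⧸ M :=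
  map N M (MonoidHom.id G) (by rwa [Subgroup.comap_id])

theorem mapOfLE_surjective (hNM : N ≤ M) : Surjective (mapOfLE hNM) :=
  map_surjective_of_surjective _ _ _ mk_surjective _

theorem ker_mapOfLE (hNM : N ≤ M) : (mapOfLE hNM).ker = M.map (mk' N) := by
  rw [mapOfLE, ker_map, Subgroup.comap_id]

end QuotientGroup

theorem isFreeGroup_ker_mapOfLE {G : Type u} [Group G] {N M : Subgroup G} [N.Normal]
    [M.Normal] (hNM : N ≤ M) (hfree : HasFreeQuotient N M) :
    IsFreeGroup (QuotientGroup.mapOfLE hNM).ker := by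
  obtain ⟨F, _, f, hF, hf, hker⟩ := hfree
  let θ : M →* G ⧸ N := (QuotientGroup.mk' N).comp M.subtype
  have hrange : θ.range = (QuotientGroup.mapOfLE hNM).ker := by
    rw [QuotientGroup.ker_mapOfLE, MonoidHom.range_comp, Subgroup.range_subtype]
  have hθ : θ.ker = f.ker := by
    rw [hker, ← MonoidHom.comap_ker, QuotientGroup.ker_mk']
    rfl
  exact IsFreeGroup.ofMulEquiv ((QuotientGroup.quotientKerEquivOfSurjective f hf).symm.trans
    ((QuotientGroup.quotientMulEquivOfEq hθ).symm.trans
      ((QuotientGroup.quotientKerEquivRange θ).trans (MulEquiv.subgroupCongr hrange))))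

namespace Monoid.CoprodI

open QuotientGroup

variable {ι : Type*} {G : ι → Type u} [∀ i, Group (G i)] {N M : ∀ i, Subgroup (G i)}
  [∀ i, (N i).Normal] [∀ i, (M i).Normal]

theorem ker_map_mk'_eq_bot (hN : ∀ i, N i = ⊥) : (map fun i => mk' (N i)).ker = ⊥ :=
  (MonoidHom.ker_eq_bot_iff _).2 <| map_injective_of_bijective fun i =>
    ⟨(MonoidHom.ker_eq_bot_iff _).1 (by rw [ker_mk', hN]), mk'_surjective _⟩

theorem ker_map_mk'_eq_top (hN : ∀ i, N i = ⊤) : (map fun i => mk' (N i)).ker = ⊤ := by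
  have : ∀ i, Subsingleton (G i ⧸ N i) := fun i => by
    rw [hN i]
    exact subsingleton_quotient_top
  exact MonoidHom.ker_eq_top_iff.2 (MonoidHom.ext fun _ => Subsingleton.elim _ _)

theorem map_mk'_eq_comp (hNM : ∀ i, N i ≤ M i) :
    (map fun i => mk' (M i)) = (map fun i => mapOfLE (hNM i)).comp (map fun i => mk' (N i)) := by
  rw [← map_comp]
  rfl

theorem ker_map_mk'_mono (hNM : ∀ i, N i ≤ M i) :
    (map fun i => mk' (N i)).ker ≤ (map fun i => mk' (M i)).ker := by
  rw [map_mk'_eq_comp hNM, ← MonoidHom.comap_ker]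
  exact MonoidHom.ker_le_comap _ _

theorem hasFreeQuotient_ker_map_mk' (hNM : ∀ i, N i ≤ M i)
    (hfree : ∀ i, HasFreeQuotient (N i) (M i)) :
    HasFreeQuotient (map fun i => mk' (N i)).ker (map fun i => mk' (M i)).ker := by
  have := isFreeGroup_ker_map (f := fun i => mapOfLE (hNM i)) (fun i => mapOfLE_surjective (hNM i))
    fun i => isFreeGroup_ker_mapOfLE (hNM i) (hfree i)
  rw [map_mk'_eq_comp hNM]
  exact hasFreeQuotient_ker_comp (map_surjective fun i => mk'_surjective _) _

end Monoid.CoprodI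

/-- A free product of normally poly-free groups, each of normally poly-free length
at most `n`, is normally poly-free of length at most `n`. -/
theorem isNormallyPolyFreeOfLen_coprodI {ι : Type v} (G : ι → Type u) [∀ i, Group (G i)]
    (n : ℕ) (h : ∀ i, IsNormallyPolyFreeOfLen n (G i)) :
    IsNormallyPolyFreeOfLen n (Monoid.CoprodI G) := by
  choose c hbot htop hmono hnormal hfree using h
  exact ⟨fun k => (Monoid.CoprodI.map fun i => QuotientGroup.mk' (c i k)).ker,
    Monoid.CoprodI.ker_map_mk'_eq_bot hbot, Monoid.CoprodI.ker_map_mk'_eq_top htop,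
    fun k => Monoid.CoprodI.ker_map_mk'_mono (hmono · k), fun k => MonoidHom.normal_ker _,
    fun k => Monoid.CoprodI.hasFreeQuotient_ker_map_mk' (hmono · k) (hfree · k)⟩
end

section
/- Let C be a subgroup of groups A and B, let G = A ∗_C B be the amalgamated free product, and let f : G → Q be a group homomorphism whose restriction to C is injective. If the kernels of f restricted to A and to B are free groups, then the kernel of f is a free group. -/
universe u

/-- The two-element family of groups `A` (at `true`) and `B` (at `false`). -/
abbrev Fam (A B : Type u) : Bool → Type u := fun b => bif b then A else B

instance famGroup (A B : Type u) [Group A] [Group B] : ∀ b, Group (Fam A B b) :=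
  fun b => match b with
  | true => inferInstanceAs (Group A)
  | false => inferInstanceAs (Group B)

/-- The family of inclusions of `C` into `A` and `B`; the amalgamated free product
`A ∗_C B` is then `Monoid.PushoutI (famHom ι₁ ι₂)`, with canonical injections
`Monoid.PushoutI.of true : A →* A ∗_C B` and `Monoid.PushoutI.of false : B →* A ∗_C B`
and common map `Monoid.PushoutI.base : C →* A ∗_C B`. -/
def famHom {A B C : Type u} [Group A] [Group B] [Group C] (ι₁ : C →* A) (ι₂ : C →* B) :
    ∀ b, C →* Fam A B b := fun b => match b with
  | true => ι₁
  | false => ι₂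

/-!
Let `G = PushoutI φ` act on `X = G ⧸ N`. The vertex group of the action groupoid at the coset
of `1` is `N`, so by the groupoid form of Nielsen–Schreier it suffices that this groupoid is free.
A functor from it to a group `Y` is a cocycle `G → (X → Y)`, i.e. (by the universal property of
the pushout) a compatible family of cocycles on `C` and on the factors `H i`. As `C` acts freely,
a cocycle on `C` is determined by its values on a spanning tree of each `C`-orbit. A cocycle on
`H i` is determined by its values on a spanning tree of each `H i`-orbit together with a
homomorphism on the stabiliser `N.comap (of i)` of a basepoint, which is free. Choosing the
`H i`-trees through representatives of the `C`-orbits makes all these choices independent, and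
the trees together with free bases of the stabilisers freely generate the groupoid.
-/

universe v

open Monoid CategoryTheory MulAction

noncomputable section

section Cocycle

variable {H G X Y : Type*} [Group H] [Group G] [Group Y] [MulAction G X]

/-- `m a x` is the label of the arrow `(ρ a)⁻¹ • x ⟶ x`: for `ρ = id` these cocycles are the
functors from the action groupoid to `Y` (see `ActionCategory.curry`). -/
def IsActionCocycle (ρ : H →* G) (m : H → X → Y) : Prop :=
  ∀ a b x, m (a * b) x = m a x * m b ((ρ a)⁻¹ • x)

theorem SemidirectProduct.left_map_mul_apply (F : H →* (X → Y) ⋊[mulAutArrow] G) (a b : H)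
    (x : X) : (F (a * b)).left x = (F a).left x * (F b).left ((F a).right⁻¹ • x) := by
  rw [map_mul, SemidirectProduct.mul_left]
  rfl

theorem isActionCocycle_left {ρ : H →* G} (F : H →* (X → Y) ⋊[mulAutArrow] G)
    (hF : ∀ a, (F a).right = ρ a) : IsActionCocycle ρ fun a => (F a).left := by
  intro a b x
  dsimp only
  rw [SemidirectProduct.left_map_mul_apply, hF]

namespace IsActionCocycle

variable {ρ : H →* G} {m m' : H → X → Y}

theorem apply_one (hm : IsActionCocycle ρ m) (x : X) : m 1 x = 1 := by
  simpa using hm 1 1 x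

theorem apply_inv (hm : IsActionCocycle ρ m) (a : H) (x : X) :
    m a⁻¹ x = (m a (ρ a • x))⁻¹ := by
  have h := hm a a⁻¹ (ρ a • x)
  rw [mul_inv_cancel, hm.apply_one, inv_smul_smul] at h
  exact eq_inv_of_mul_eq_one_right h.symm

theorem conj (hm : IsActionCocycle ρ m) (w : X → Y) :
    IsActionCocycle ρ fun a x => w x * m a x * (w ((ρ a)⁻¹ • x))⁻¹ := by
  intro a b x
  simp only [hm a b x, map_mul, mul_inv_rev, mul_smul]
  group

theorem coboundary (u : X → Y) :
    IsActionCocycle ρ fun a x => u x * (u ((ρ a)⁻¹ • x))⁻¹ := by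
  simpa using conj (m := fun _ _ => 1) (fun _ _ _ => (mul_one 1).symm) u

theorem map_hom {K : Type*} [Group K] {l : H → X → K} (hl : IsActionCocycle ρ l)
    (P : X → K →* Y) (hP : ∀ a x, P (ρ a • x) = P x) :
    IsActionCocycle ρ fun a x => P x (l a x) := by
  intro a b x
  simp only [hl a b x, map_mul, ← _root_.map_inv, hP]

def toHom (hm : IsActionCocycle ρ m) : H →* (X → Y) ⋊[mulAutArrow] G :=
  MonoidHom.mk' (fun a => ⟨m a, ρ a⟩) fun a b =>
    SemidirectProduct.ext (funext fun x => hm a b x) (map_mul ρ a b)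

@[simp]
theorem toHom_left (hm : IsActionCocycle ρ m) (a : H) : (hm.toHom a).left = m a := rfl

theorem ext_of_transversal (hm : IsActionCocycle ρ m) (hm' : IsActionCocycle ρ m')
    (bp : X → X) (t : X → H) (ht : ∀ x, ρ (t x) • bp x = x) (hbp : ∀ a x, bp (ρ a • x) = bp x)
    (h_t : ∀ x, m (t x) x = m' (t x) x)
    (h_stab : ∀ x k, ρ k • bp x = bp x → m k (bp x) = m' k (bp x)) : m = m' := by
  have ht' : ∀ y, (ρ (t y))⁻¹ • y = bp y := fun y => inv_smul_eq_iff.mpr (ht y).symm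
  funext a b
  set x := (ρ a)⁻¹ • b
  set k := (t b)⁻¹ * a * t x
  have hbpx : bp x = bp b := by simp only [x, ← _root_.map_inv, hbp]
  have hk : ρ k • bp b = bp b := by
    rw [map_mul, map_mul, mul_smul, mul_smul, ← hbpx, ht, smul_inv_smul, _root_.map_inv, ht',
      hbpx]
  have hkb : (ρ (t b * k))⁻¹ • b = bp b := by
    rw [map_mul, mul_inv_rev, mul_smul, ht', inv_smul_eq_iff, hk]
  have expand : ∀ n : H → X → Y, IsActionCocycle ρ n →
      n a b = n (t b) b * n k (bp b) * (n (t x) x)⁻¹ := by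
    intro n hn
    have ha : a = t b * k * (t x)⁻¹ := by simp only [k]; group
    rw [ha, hn, hn, hn.apply_inv, hkb, ht', ← hbpx, ht]
  rw [expand m hm, expand m' hm', h_t, h_t, h_stab b k hk]

def stabilizerHom (hm : IsActionCocycle ρ m) (K : Subgroup H) (x : X)
    (hK : ∀ k ∈ K, ρ k • x = x) : K →* Y :=
  MonoidHom.mk' (fun k => m k x) fun k k' => by
    rw [Subgroup.coe_mul, hm, inv_smul_eq_iff.mpr (hK k k.2).symm]

theorem apply_eq_of_isFreeGroup (hm : IsActionCocycle ρ m) (hm' : IsActionCocycle ρ m')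
    (K : Subgroup H) [IsFreeGroup K] (x : X) (hK : ∀ k ∈ K, ρ k • x = x)
    (h : ∀ g, m (IsFreeGroup.of g : K) x = m' (IsFreeGroup.of g : K) x) (k : K) :
    m k x = m' k x :=
  DFunLike.congr_fun (IsFreeGroup.ext_hom (f := hm.stabilizerHom K x hK)
    (g := hm'.stabilizerHom K x hK) h) k

end IsActionCocycle

end Cocycle

namespace CategoryTheory.ActionCategory

variable {G X Y : Type*} [Group G] [MulAction G X] [Group Y]

theorem map_eq_curry_left (E : ActionCategory G X ⥤ SingleObj Y) {p q : ActionCategory G X}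
    (f : p ⟶ q) : E.map f = (curry E f.val).left q.back := by
  induction f using ActionCategory.cases
  rfl

theorem eq_uncurry_of_curry_eq (E : ActionCategory G X ⥤ SingleObj Y)
    (F : G →* (X → Y) ⋊[mulAutArrow] G) (sane : ∀ g, (F g).right = g) (h : curry E = F) :
    E = uncurry F sane :=
  Functor.hext (fun _ => Subsingleton.elim _ _) fun _ _ f =>
    heq_of_eq ((map_eq_curry_left E f).trans (by rw [h]; rfl))

end CategoryTheory.ActionCategory

theorem QuotientGroup.smul_eq_self_iff_mem {G : Type*} [Group G] {N : Subgroup G}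
    [hN : N.Normal] {g : G} {x : G ⧸ N} : g • x = x ↔ g ∈ N := by
  induction x using QuotientGroup.induction_on with
  | H h =>
    rw [MulAction.Quotient.smul_mk, QuotientGroup.eq, smul_eq_mul, mul_inv_rev, mul_assoc,
      hN.mem_comm_iff, mul_inv_cancel_right, inv_mem_iff]

namespace MulAction

variable {H G X : Type*} [Group H] [Group G] [MulAction G X] (ρ : H →* G)

theorem exists_smul_out_orbitRel_range (x : X) :
    ∃ a, ρ a • (Quotient.mk (orbitRel ρ.range X) x).out = x := by
  obtain ⟨⟨_, a, rfl⟩, h⟩ := Quotient.mk_out (s := orbitRel ρ.range X) x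
  exact ⟨a⁻¹, by rw [← h, _root_.map_inv]; exact inv_smul_smul (ρ a) x⟩

theorem mk_smul_orbitRel_range (a : H) (x : X) :
    Quotient.mk (orbitRel ρ.range X) (ρ a • x) = Quotient.mk _ x :=
  Quotient.sound ⟨⟨ρ a, a, rfl⟩, rfl⟩

end MulAction

namespace Monoid.PushoutI

variable {ι : Type v} {H : ι → Type u} {C : Type u} [∀ i, Group (H i)] [Group C]
  {φ : ∀ i, C →* H i} {N : Subgroup (PushoutI φ)}

section Transversals

variable (N) in
abbrev BaseOrbits := orbitRel.Quotient (base φ).range (PushoutI φ ⧸ N)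

variable (N) in
abbrev FactorOrbits (i : ι) := orbitRel.Quotient (of (φ := φ) i).range (PushoutI φ ⧸ N)

def baseOrbit (x : PushoutI φ ⧸ N) : BaseOrbits N := Quotient.mk _ x

def factorOrbit (i : ι) (x : PushoutI φ ⧸ N) : FactorOrbits N i := Quotient.mk _ x

def baseRep (x : PushoutI φ ⧸ N) : PushoutI φ ⧸ N := (baseOrbit x).out

def baseOffset (x : PushoutI φ ⧸ N) : C := (exists_smul_out_orbitRel_range (base φ) x).choose

theorem baseOffset_smul_baseRep (x : PushoutI φ ⧸ N) :
    base φ (baseOffset x) • baseRep x = x :=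
  (exists_smul_out_orbitRel_range (base φ) x).choose_spec

theorem baseOrbit_smul (c : C) (x : PushoutI φ ⧸ N) :
    baseOrbit (base φ c • x) = baseOrbit x :=
  mk_smul_orbitRel_range _ c x

theorem factorOrbit_smul (i : ι) (a : H i) (x : PushoutI φ ⧸ N) :
    factorOrbit i (of (φ := φ) i a • x) = factorOrbit i x :=
  mk_smul_orbitRel_range _ a x

theorem baseRep_smul (c : C) (x : PushoutI φ ⧸ N) : baseRep (base φ c • x) = baseRep x := by
  rw [baseRep, baseOrbit_smul, baseRep]

theorem baseRep_out (o : BaseOrbits N) : baseRep o.out = o.out := by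
  rw [baseRep, baseOrbit, Quotient.out_eq]

theorem baseRep_baseRep (x : PushoutI φ ⧸ N) : baseRep (baseRep x) = baseRep x :=
  baseRep_out _

theorem factorOrbit_baseRep (i : ι) (x : PushoutI φ ⧸ N) :
    factorOrbit i (baseRep x) = factorOrbit i x := by
  conv_rhs => rw [← baseOffset_smul_baseRep x, ← of_apply_eq_base φ i, factorOrbit_smul]

def orbitBasepoint (i : ι) (o : FactorOrbits N i) : PushoutI φ ⧸ N := baseRep o.out

def basepoint (i : ι) (x : PushoutI φ ⧸ N) : PushoutI φ ⧸ N :=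
  orbitBasepoint i (factorOrbit i x)

theorem factorOrbit_orbitBasepoint (i : ι) (o : FactorOrbits N i) :
    factorOrbit i (orbitBasepoint i o) = o := by
  rw [orbitBasepoint, factorOrbit_baseRep]
  exact Quotient.out_eq o

theorem basepoint_orbitBasepoint (i : ι) (o : FactorOrbits N i) :
    basepoint i (orbitBasepoint i o) = orbitBasepoint i o := by
  rw [basepoint, factorOrbit_orbitBasepoint]

theorem basepoint_basepoint (i : ι) (x : PushoutI φ ⧸ N) :
    basepoint i (basepoint i x) = basepoint i x :=
  basepoint_orbitBasepoint i _

theorem baseRep_basepoint (i : ι) (x : PushoutI φ ⧸ N) :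
    baseRep (basepoint i x) = basepoint i x :=
  baseRep_baseRep _

theorem basepoint_smul (i : ι) (a : H i) (x : PushoutI φ ⧸ N) :
    basepoint i (of (φ := φ) i a • x) = basepoint i x := by
  rw [basepoint, factorOrbit_smul, basepoint]

theorem basepoint_inv_smul (i : ι) (a : H i) (x : PushoutI φ ⧸ N) :
    basepoint i ((of (φ := φ) i a)⁻¹ • x) = basepoint i x := by
  rw [← _root_.map_inv, basepoint_smul]

theorem basepoint_baseRep (i : ι) (x : PushoutI φ ⧸ N) :
    basepoint i (baseRep x) = basepoint i x := by
  rw [basepoint, factorOrbit_baseRep, basepoint]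

theorem exists_of_smul_basepoint (i : ι) (x : PushoutI φ ⧸ N) :
    ∃ a, of (φ := φ) i a • basepoint i x = x := by
  obtain ⟨a, ha⟩ := exists_smul_out_orbitRel_range (of (φ := φ) i) x
  refine ⟨a * φ i (baseOffset (factorOrbit i x).out), ?_⟩
  rw [map_mul, mul_smul, of_apply_eq_base, basepoint, orbitBasepoint, baseOffset_smul_baseRep]
  exact ha

open Classical in
/-- Normalised to `1` at basepoints, so that `factorOffset` vanishes there. -/
def treeElt (i : ι) (y : PushoutI φ ⧸ N) : H i :=
  if y = basepoint i y then 1 else (exists_of_smul_basepoint i y).choose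

theorem of_treeElt_smul (i : ι) (y : PushoutI φ ⧸ N) :
    of (φ := φ) i (treeElt i y) • basepoint i y = y := by
  unfold treeElt
  split_ifs with h
  · rw [map_one, one_smul, ← h]
  · exact (exists_of_smul_basepoint i y).choose_spec

/-- Going through the `C`-representative makes this compatible with the `C`-action
(`factorOffset_base_smul`). -/
def factorOffset (i : ι) (x : PushoutI φ ⧸ N) : H i :=
  φ i (baseOffset x) * treeElt i (baseRep x)

theorem of_factorOffset_smul (i : ι) (x : PushoutI φ ⧸ N) :
    of (φ := φ) i (factorOffset i x) • basepoint i x = x := by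
  rw [factorOffset, map_mul, mul_smul, of_apply_eq_base, ← basepoint_baseRep, of_treeElt_smul,
    baseOffset_smul_baseRep]

section FreeBaseAction

variable [N.Normal] (hC : N.comap (base φ) = ⊥)
include hC

theorem base_smul_injective {c c' : C} {x : PushoutI φ ⧸ N}
    (h : base φ c • x = base φ c' • x) : c = c' := by
  rw [← inv_smul_eq_iff, ← mul_smul, ← _root_.map_inv, ← map_mul,
    QuotientGroup.smul_eq_self_iff_mem, ← Subgroup.mem_comap, hC, Subgroup.mem_bot,
    inv_mul_eq_one] at h
  exact h.symm

theorem baseOffset_base_smul (c : C) (x : PushoutI φ ⧸ N) :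
    baseOffset (base φ c • x) = c * baseOffset x := by
  refine base_smul_injective hC (x := baseRep x) ?_
  have h := baseOffset_smul_baseRep (base φ c • x)
  rw [baseRep_smul] at h
  rw [h, map_mul, mul_smul, baseOffset_smul_baseRep]

theorem baseOffset_eq_one {x : PushoutI φ ⧸ N} (h : x = baseRep x) : baseOffset x = 1 := by
  refine base_smul_injective hC (x := baseRep x) ?_
  rw [baseOffset_smul_baseRep, map_one, one_smul, ← h]

theorem factorOffset_base_smul (i : ι) (c : C) (x : PushoutI φ ⧸ N) :
    factorOffset i (base φ c • x) = φ i c * factorOffset i x := by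
  rw [factorOffset, factorOffset, baseOffset_base_smul hC, baseRep_smul, map_mul, mul_assoc]

theorem factorOffset_basepoint (i : ι) (x : PushoutI φ ⧸ N) :
    factorOffset i (basepoint i x) = 1 := by
  rw [factorOffset, baseOffset_eq_one hC (baseRep_basepoint i x).symm, map_one, one_mul,
    baseRep_basepoint, treeElt, if_pos (basepoint_basepoint i x).symm]

theorem factorOffset_eq_one {i : ι} {y : PushoutI φ ⧸ N} (h : y = basepoint i y) :
    factorOffset i y = 1 := by
  rw [h, factorOffset_basepoint hC]

end FreeBaseAction

end Transversals

section StabilizerCocycle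

variable [N.Normal]

theorem of_smul_eq_self_iff {i : ι} {a : H i} {x : PushoutI φ ⧸ N} :
    of (φ := φ) i a • x = x ↔ a ∈ N.comap (of i) :=
  QuotientGroup.smul_eq_self_iff_mem

def stabCocycle (i : ι) (a : H i) (x : PushoutI φ ⧸ N) : N.comap (of (φ := φ) i) :=
  ⟨(factorOffset i x)⁻¹ * a * factorOffset i ((of (φ := φ) i a)⁻¹ • x), by
    rw [← of_smul_eq_self_iff (x := basepoint i x), map_mul, map_mul, mul_smul, mul_smul,
      ← basepoint_inv_smul i a x, of_factorOffset_smul, smul_inv_smul, basepoint_inv_smul,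
      _root_.map_inv, inv_smul_eq_iff, of_factorOffset_smul]⟩

theorem coe_stabCocycle (i : ι) (a : H i) (x : PushoutI φ ⧸ N) :
    (stabCocycle i a x : H i) =
      (factorOffset i x)⁻¹ * a * factorOffset i ((of (φ := φ) i a)⁻¹ • x) :=
  rfl

theorem isActionCocycle_stabCocycle (i : ι) :
    IsActionCocycle (of (φ := φ) i) (stabCocycle (N := N) i) := by
  intro a b x
  ext
  rw [Subgroup.coe_mul, coe_stabCocycle, coe_stabCocycle, coe_stabCocycle, map_mul, mul_inv_rev,
    mul_smul]
  group

variable (hC : N.comap (base φ) = ⊥)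
include hC

theorem stabCocycle_φ (i : ι) (c : C) (x : PushoutI φ ⧸ N) :
    stabCocycle i (φ i c) x = 1 := by
  ext
  rw [coe_stabCocycle, of_apply_eq_base, ← _root_.map_inv, factorOffset_base_smul hC,
    _root_.map_inv, OneMemClass.coe_one]
  group

theorem stabCocycle_factorOffset (i : ι) (x : PushoutI φ ⧸ N) :
    stabCocycle i (factorOffset i x) x = 1 := by
  ext
  rw [coe_stabCocycle, inv_smul_eq_iff.mpr (of_factorOffset_smul i x).symm,
    factorOffset_basepoint hC, OneMemClass.coe_one]
  group

theorem stabCocycle_basepoint (i : ι) (x : PushoutI φ ⧸ N) (k : N.comap (of (φ := φ) i)) :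
    stabCocycle i k (basepoint i x) = k := by
  ext
  rw [coe_stabCocycle, inv_smul_eq_iff.mpr (of_smul_eq_self_iff.mpr k.2).symm,
    factorOffset_basepoint hC]
  group

end StabilizerCocycle

variable [∀ i, IsFreeGroup (N.comap (of (φ := φ) i))]

variable (N) in
/-- Free generators of the action groupoid: a spanning tree of each `C`-orbit (`baseEdge`), one
of the `C`-orbits inside each `H i`-orbit (`factorEdge`), and a free basis of the stabiliser
`N.comap (of i)` at each `H i`-basepoint (`loop`). -/
inductive ActionGen : PushoutI φ ⧸ N → PushoutI φ ⧸ N → Type (max u v)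
  | baseEdge (y : PushoutI φ ⧸ N) (h : y ≠ baseRep y) : ActionGen (baseRep y) y
  | loop (i : ι) (o : FactorOrbits N i) (k : IsFreeGroup.Generators (N.comap (of (φ := φ) i))) :
      ActionGen (orbitBasepoint i o) (orbitBasepoint i o)
  | factorEdge (i : ι) (o : BaseOrbits N) (h : o.out ≠ basepoint i o.out) :
      ActionGen (basepoint i o.out) o.out

def ActionGen.elt : ∀ {x y : PushoutI φ ⧸ N}, ActionGen N x y → PushoutI φ
  | _, _, .baseEdge y _ => PushoutI.base φ (baseOffset y)
  | _, _, .loop i _ k => of i (IsFreeGroup.of k : N.comap (of (φ := φ) i))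
  | _, _, .factorEdge i o _ => of i (factorOffset i o.out)

theorem ActionGen.elt_smul [N.Normal] :
    ∀ {x y : PushoutI φ ⧸ N} (e : ActionGen N x y), e.elt • x = y
  | _, _, .baseEdge y _ => baseOffset_smul_baseRep y
  | _, _, .loop _ _ k => of_smul_eq_self_iff.mpr (IsFreeGroup.of k).2
  | _, _, .factorEdge i o _ => of_factorOffset_smul i o.out

section Existence

variable {Y : Type*} [Group Y] (lab : ∀ ⦃x y : PushoutI φ ⧸ N⦄, ActionGen N x y → Y)

open Classical in
def baseLabel (x : PushoutI φ ⧸ N) : Y := if h : x = baseRep x then 1 else lab (.baseEdge x h)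

open Classical in
def treeLabel (i : ι) (o : BaseOrbits N) : Y :=
  if h : o.out = basepoint i o.out then 1 else lab (.factorEdge i o h)

def loopHom (i : ι) (o : FactorOrbits N i) : N.comap (of (φ := φ) i) →* Y :=
  IsFreeGroup.lift fun k => lab (.loop i o k)

/-- The label of the arrow `of i (factorOffset i x)` from `basepoint i x` to `x`. -/
def offsetLabel (i : ι) (x : PushoutI φ ⧸ N) : Y :=
  baseLabel lab x * treeLabel lab i (baseOrbit x)

theorem baseLabel_baseRep (x : PushoutI φ ⧸ N) : baseLabel lab (baseRep x) = 1 :=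
  dif_pos (baseRep_baseRep x).symm

theorem offsetLabel_basepoint (i : ι) (x : PushoutI φ ⧸ N) :
    offsetLabel lab i (basepoint i x) = 1 := by
  rw [offsetLabel, ← baseRep_basepoint, baseLabel_baseRep, one_mul, treeLabel, dif_pos]
  show baseRep (baseRep (basepoint i x)) = basepoint i (baseRep (baseRep (basepoint i x)))
  rw [baseRep_baseRep, baseRep_basepoint, basepoint_basepoint]

def baseCocycle (c : C) (x : PushoutI φ ⧸ N) : Y :=
  baseLabel lab x * (baseLabel lab ((base φ c)⁻¹ • x))⁻¹

theorem isActionCocycle_baseCocycle : IsActionCocycle (base φ) (baseCocycle lab) :=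
  IsActionCocycle.coboundary (baseLabel lab)

variable [N.Normal]

def factorCocycle (i : ι) (a : H i) (x : PushoutI φ ⧸ N) : Y :=
  offsetLabel lab i x * loopHom lab i (factorOrbit i x) (stabCocycle i a x) *
    (offsetLabel lab i ((of (φ := φ) i a)⁻¹ • x))⁻¹

theorem isActionCocycle_factorCocycle (i : ι) :
    IsActionCocycle (of (φ := φ) i) (factorCocycle lab i) :=
  ((isActionCocycle_stabCocycle i).map_hom (fun x => loopHom lab i (factorOrbit i x))
    fun a x => by rw [factorOrbit_smul]).conj (offsetLabel lab i)

variable (hC : N.comap (base φ) = ⊥)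
include hC

theorem factorCocycle_comp (i : ι) :
    (isActionCocycle_factorCocycle lab i).toHom.comp (φ i) =
      (isActionCocycle_baseCocycle lab).toHom := by
  refine MonoidHom.ext fun c =>
    SemidirectProduct.ext (funext fun x => ?_) (of_apply_eq_base φ i c)
  have hx : (of (φ := φ) i (φ i c))⁻¹ • x = base φ c⁻¹ • x := by
    rw [of_apply_eq_base, _root_.map_inv]
  show factorCocycle lab i (φ i c) x = baseCocycle lab c x
  rw [factorCocycle, baseCocycle, stabCocycle_φ hC, map_one, mul_one, hx, offsetLabel,
    offsetLabel, baseOrbit_smul, _root_.map_inv]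
  group

def liftOfLabels : PushoutI φ →* (PushoutI φ ⧸ N → Y) ⋊[mulAutArrow] PushoutI φ :=
  PushoutI.lift (fun i => (isActionCocycle_factorCocycle lab i).toHom)
    (isActionCocycle_baseCocycle lab).toHom (factorCocycle_comp lab hC)

theorem liftOfLabels_of (i : ι) (a : H i) :
    liftOfLabels lab hC (of i a) = (isActionCocycle_factorCocycle lab i).toHom a :=
  PushoutI.lift_of _ _ _ a

theorem liftOfLabels_base (c : C) :
    liftOfLabels lab hC (base φ c) = (isActionCocycle_baseCocycle lab).toHom c :=
  PushoutI.lift_base _ _ _ c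

theorem liftOfLabels_right (g : PushoutI φ) : (liftOfLabels lab hC g).right = g := by
  suffices SemidirectProduct.rightHom.comp (liftOfLabels lab hC) = MonoidHom.id _ from
    DFunLike.congr_fun this g
  refine PushoutI.hom_ext (fun i => MonoidHom.ext fun a => ?_) (MonoidHom.ext fun c => ?_)
  · exact congrArg SemidirectProduct.right (liftOfLabels_of lab hC i a)
  · exact congrArg SemidirectProduct.right (liftOfLabels_base lab hC c)

theorem liftOfLabels_elt {x y : PushoutI φ ⧸ N} (e : ActionGen N x y) :
    (liftOfLabels lab hC e.elt).left y = lab e := by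
  cases e with
  | baseEdge y h =>
    rw [ActionGen.elt, liftOfLabels_base, IsActionCocycle.toHom_left, baseCocycle,
      inv_smul_eq_iff.mpr (baseOffset_smul_baseRep y).symm, baseLabel_baseRep, inv_one, mul_one,
      baseLabel, dif_neg h]
  | loop i o k =>
    have hz := basepoint_orbitBasepoint i o
    have hk : (of (φ := φ) i (IsFreeGroup.of k : N.comap (of (φ := φ) i)))⁻¹ •
        orbitBasepoint i o = orbitBasepoint i o :=
      inv_smul_eq_iff.mpr (of_smul_eq_self_iff.mpr (IsFreeGroup.of k).2).symm
    have hoff : offsetLabel lab i (orbitBasepoint i o) = 1 := by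
      rw [← hz, offsetLabel_basepoint]
    have hstab := stabCocycle_basepoint hC i (orbitBasepoint i o) (IsFreeGroup.of k)
    rw [hz] at hstab
    rw [ActionGen.elt, liftOfLabels_of, IsActionCocycle.toHom_left, factorCocycle, hk, hstab,
      factorOrbit_orbitBasepoint, hoff, loopHom, IsFreeGroup.lift_of]
    group
  | factorEdge i o h =>
    have hbase : baseLabel lab o.out = 1 := by rw [← baseRep_out]; exact baseLabel_baseRep lab _
    rw [ActionGen.elt, liftOfLabels_of, IsActionCocycle.toHom_left, factorCocycle,
      stabCocycle_factorOffset hC, map_one, mul_one,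
      inv_smul_eq_iff.mpr (of_factorOffset_smul i o.out).symm, offsetLabel_basepoint, inv_one,
      mul_one, offsetLabel, hbase, one_mul, baseOrbit, Quotient.out_eq, treeLabel, dif_neg h]

end Existence

section Uniqueness

variable [N.Normal] (hC : N.comap (base φ) = ⊥) {Y : Type*} [Group Y]
  {F F' : PushoutI φ →* (PushoutI φ ⧸ N → Y) ⋊[mulAutArrow] PushoutI φ}
  (hF : ∀ g, (F g).right = g) (hF' : ∀ g, (F' g).right = g)
  (hgen : ∀ ⦃x y⦄ (e : ActionGen N x y), (F e.elt).left y = (F' e.elt).left y)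
include hC hgen

theorem left_base_baseOffset_eq (x : PushoutI φ ⧸ N) :
    (F (base φ (baseOffset x))).left x = (F' (base φ (baseOffset x))).left x := by
  by_cases h : x = baseRep x
  · simp only [baseOffset_eq_one hC h, map_one, SemidirectProduct.one_left]
  · exact hgen (.baseEdge x h)

include hF hF'

theorem left_of_factorOffset_eq (i : ι) (x : PushoutI φ ⧸ N) :
    (F (of i (factorOffset i x))).left x = (F' (of i (factorOffset i x))).left x := by
  have hsplit : of (φ := φ) i (factorOffset i x) =
      base φ (baseOffset x) * of i (factorOffset i (baseRep x)) := by
    conv_lhs => rw [← baseOffset_smul_baseRep x]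
    rw [factorOffset_base_smul hC, map_mul, of_apply_eq_base]
  have hrep : (base φ (baseOffset x))⁻¹ • x = baseRep x :=
    inv_smul_eq_iff.mpr (baseOffset_smul_baseRep x).symm
  rw [hsplit, SemidirectProduct.left_map_mul_apply, SemidirectProduct.left_map_mul_apply, hF,
    hF', hrep, left_base_baseOffset_eq hC hgen]
  congr 1
  by_cases h : baseRep x = basepoint i (baseRep x)
  · simp only [factorOffset_eq_one hC h, map_one, SemidirectProduct.one_left]
  · exact hgen (.factorEdge i (baseOrbit x) h)

theorem hom_ext_of_elt : F = F' := by
  refine PushoutI.hom_ext (fun i => MonoidHom.ext fun a => ?_) (MonoidHom.ext fun c => ?_)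
  · have hm := isActionCocycle_left (F.comp (of i)) fun a => hF (of i a)
    have hm' := isActionCocycle_left (F'.comp (of i)) fun a => hF' (of i a)
    have h := hm.ext_of_transversal hm' (basepoint i) (factorOffset i) (of_factorOffset_smul i)
      (basepoint_smul i) (left_of_factorOffset_eq hC hF hF' hgen i) fun x k hk =>
        hm.apply_eq_of_isFreeGroup hm' (N.comap (of i)) (basepoint i x)
          (fun _ hk => of_smul_eq_self_iff.mpr hk)
          (fun g => by exact hgen (.loop i (factorOrbit i x) g))
          ⟨k, of_smul_eq_self_iff.mp hk⟩
    exact SemidirectProduct.ext (congrFun h a) ((hF _).trans (hF' _).symm)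
  · have hm := isActionCocycle_left (F.comp (base φ)) fun c => hF (base φ c)
    have hm' := isActionCocycle_left (F'.comp (base φ)) fun c => hF' (base φ c)
    have h := hm.ext_of_transversal hm' baseRep baseOffset baseOffset_smul_baseRep baseRep_smul
      (left_base_baseOffset_eq hC hgen) fun x k hk => by
        obtain rfl : k = 1 := base_smul_injective hC (by rwa [map_one, one_smul])
        rw [hm.apply_one, hm'.apply_one]
    exact SemidirectProduct.ext (congrFun h c) ((hF _).trans (hF' _).symm)

end Uniqueness

variable [N.Normal]

abbrev actionGroupoidIsFree (hC : N.comap (base φ) = ⊥) :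
    IsFreeGroupoid (ActionCategory (PushoutI φ) (PushoutI φ ⧸ N)) where
  quiverGenerators := ⟨fun a b => ActionGen N a.back b.back⟩
  of e := ⟨ActionGen.elt e, ActionGen.elt_smul e⟩
  unique_lift {Y} _ lab := by
    let lab' : ∀ ⦃x y : PushoutI φ ⧸ N⦄, ActionGen N x y → Y := fun x y e =>
      lab (a := (x : ActionCategory (PushoutI φ) (PushoutI φ ⧸ N)))
        (b := (y : ActionCategory (PushoutI φ) (PushoutI φ ⧸ N))) e
    refine ⟨ActionCategory.uncurry (liftOfLabels lab' hC) (liftOfLabels_right lab' hC),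
      by rintro ⟨⟨⟩, x⟩ ⟨⟨⟩, y⟩ e; exact liftOfLabels_elt lab' hC e, fun E hE => ?_⟩
    refine ActionCategory.eq_uncurry_of_curry_eq E _ _
      (hom_ext_of_elt hC (fun _ => rfl) (liftOfLabels_right lab' hC) fun x y e => ?_)
    exact (ActionCategory.map_eq_curry_left E _).symm.trans
      ((hE (x : ActionCategory (PushoutI φ) (PushoutI φ ⧸ N))
        (y : ActionCategory (PushoutI φ) (PushoutI φ ⧸ N)) e).trans
        (liftOfLabels_elt lab' hC e).symm)

theorem isFreeGroup_of_comap_base_eq_bot (hC : N.comap (base φ) = ⊥) : IsFreeGroup N := by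
  -- Instances are passed by hand: the groupoid structure on `ActionCategory` and its derived
  -- category structure only agree up to default transparency.
  have hconn : IsConnected (ActionCategory (PushoutI φ) (PushoutI φ ⧸ N)) := inferInstance
  have hEnd := @IsFreeGroupoid.endIsFreeOfConnectedFree _ _ hconn (actionGroupoidIsFree hC)
    (ActionCategory.objEquiv (PushoutI φ) (PushoutI φ ⧸ N) (1 : PushoutI φ))
  have e := ActionCategory.endMulEquivSubgroup N
  exact @IsFreeGroup.ofMulEquiv _ _ hEnd _ _ ⟨e.toEquiv, e.map_mul'⟩

end Monoid.PushoutI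

end

theorem ker_isFreeGroup_of_amalgamated_general (A B C Q : Type u)
    [Group A] [Group B] [Group C] [Group Q]
    (ι₁ : C →* A) (ι₂ : C →* B)
    (f : Monoid.PushoutI (famHom ι₁ ι₂) →* Q)
    (hC : Function.Injective (f.comp (Monoid.PushoutI.base (famHom ι₁ ι₂))))
    (hA : IsFreeGroup (f.comp (Monoid.PushoutI.of (φ := famHom ι₁ ι₂) true)).ker)
    (hB : IsFreeGroup (f.comp (Monoid.PushoutI.of (φ := famHom ι₁ ι₂) false)).ker) :
    IsFreeGroup f.ker := by
  have : ∀ i, IsFreeGroup (f.ker.comap (Monoid.PushoutI.of (φ := famHom ι₁ ι₂) i)) := by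
    rintro (_ | _) <;> rwa [MonoidHom.comap_ker]
  exact Monoid.PushoutI.isFreeGroup_of_comap_base_eq_bot
    (by rwa [MonoidHom.comap_ker, MonoidHom.ker_eq_bot_iff])

/-- Let `C` be a subgroup of `A` and of `B` (via injections `ι₁`, `ι₂`),
let `G = A ∗_C B`, and let `f : G → Q` be a homomorphism whose restriction to `C`
is injective. If the kernels of the restrictions of `f` to `A` and to `B` are free
groups, then the kernel of `f` is a free group. -/
theorem ker_isFreeGroup_of_amalgamated (A B C Q : Type u)
    [Group A] [Group B] [Group C] [Group Q]
    (ι₁ : C →* A) (ι₂ : C →* B)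
    (h₁ : Function.Injective ι₁) (h₂ : Function.Injective ι₂)
    (f : Monoid.PushoutI (famHom ι₁ ι₂) →* Q)
    (hC : Function.Injective (f.comp (Monoid.PushoutI.base (famHom ι₁ ι₂))))
    (hA : IsFreeGroup (f.comp (Monoid.PushoutI.of (φ := famHom ι₁ ι₂) true)).ker)
    (hB : IsFreeGroup (f.comp (Monoid.PushoutI.of (φ := famHom ι₁ ι₂) false)).ker) :
    IsFreeGroup f.ker :=
  ker_isFreeGroup_of_amalgamated_general A B C Q ι₁ ι₂ f hC hA hB
end

section
/- Let A_{I_n} be the Artin group on two generators with edge label n ≥ 2, and let χ : A_{I_n} → ℤ be the homomorphism sending both generators to 1. Then χ is surjective and its kernel is a free group. -/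
/-- The alternating product `x * y * x * ⋯` of length `n`. -/
def altProd {M : Type*} [Monoid M] (x y : M) : ℕ → M
  | 0 => 1
  | n + 1 => x * altProd y x n

/-- The dihedral Artin group with label `n`:
`⟨x, y ∣ ⟨x,y⟩ⁿ = ⟨y,x⟩ⁿ⟩` where `⟨x,y⟩ⁿ` is the alternating product of length `n`,
with `x = FreeGroup.of true`, `y = FreeGroup.of false`. -/
abbrev DihedralArtin (n : ℕ) : Type :=
  PresentedGroup
    ({altProd (FreeGroup.of true) (FreeGroup.of false) n *
        (altProd (FreeGroup.of false) (FreeGroup.of true) n)⁻¹} : Set (FreeGroup Bool))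

/-!
Put `u = y x⁻¹` and `aⱼ = xʲ u x⁻ʲ`. Both sides of the relation are products of the `aⱼ`
(`j < n`) followed by `xⁿ`, so the relation reads `a₁ a₃ ⋯ = a₀ a₂ ⋯`. It can be solved for
`aₙ₋₁` in terms of `a₀, …, aₙ₋₂`, and, conjugated by `x⁻¹`, for `a₋₁` in terms of the same.
Hence on the free group `F` on `a₀, …, aₙ₋₂` the shift `aⱼ ↦ aⱼ₊₁` (with `aₙ₋₁` replaced by
its solution) is an automorphism, whose inverse sends `a₀` to the solution for `a₋₁`. The group
is then `F ⋊ ℤ`, with `x` generating `ℤ`, and `χ` becomes the projection to `ℤ`, whose kernel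
is `F`.
-/

theorem map_altProd {M N : Type*} [Monoid M] [Monoid N] (f : M →* N) (x y : M) (k : ℕ) :
    f (altProd x y k) = altProd (f x) (f y) k := by
  induction k generalizing x y with
  | zero => simp [altProd]
  | succ k ih => simp [altProd, ih]

section EvenOddProducts

variable {M : Type*} [Monoid M]

def evenProd (a : ℕ → M) (k : ℕ) : M := (((List.range k).filter (Even ·)).map a).prod

def oddProd (a : ℕ → M) (k : ℕ) : M := (((List.range k).filter (Odd ·)).map a).prod

theorem evenProd_succ (a : ℕ → M) (k : ℕ) :
    evenProd a (k + 1) = a 0 * oddProd (fun j => a (j + 1)) k := by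
  simp [evenProd, oddProd, List.range_succ_eq_map, List.filter_map, Function.comp_def,
    Nat.even_add_one]

theorem oddProd_succ (a : ℕ → M) (k : ℕ) :
    oddProd a (k + 1) = evenProd (fun j => a (j + 1)) k := by
  simp [evenProd, oddProd, List.range_succ_eq_map, List.filter_map, Function.comp_def,
    Nat.odd_add_one]

theorem evenProd_succ_of_even {k : ℕ} (hk : Even k) (a : ℕ → M) :
    evenProd a (k + 1) = evenProd a k * a k := by
  simp [evenProd, List.range_succ, hk]

theorem evenProd_succ_of_odd {k : ℕ} (hk : Odd k) (a : ℕ → M) :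
    evenProd a (k + 1) = evenProd a k := by
  simp [evenProd, List.range_succ, Nat.not_even_iff_odd.2 hk]

theorem oddProd_succ_of_even {k : ℕ} (hk : Even k) (a : ℕ → M) :
    oddProd a (k + 1) = oddProd a k := by
  simp [oddProd, List.range_succ, Nat.not_odd_iff_even.2 hk]

theorem oddProd_succ_of_odd {k : ℕ} (hk : Odd k) (a : ℕ → M) :
    oddProd a (k + 1) = oddProd a k * a k := by
  simp [oddProd, List.range_succ, hk]

theorem evenProd_congr {a b : ℕ → M} {k : ℕ} (h : ∀ j < k, a j = b j) :
    evenProd a k = evenProd b k := by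
  unfold evenProd
  congr 1
  exact List.map_congr_left fun j hj => h j (List.mem_range.1 (List.mem_filter.1 hj).1)

theorem oddProd_congr {a b : ℕ → M} {k : ℕ} (h : ∀ j < k, a j = b j) :
    oddProd a k = oddProd b k := by
  unfold oddProd
  congr 1
  exact List.map_congr_left fun j hj => h j (List.mem_range.1 (List.mem_filter.1 hj).1)

theorem map_evenProd {N : Type*} [Monoid N] (f : M →* N) (a : ℕ → M) (k : ℕ) :
    f (evenProd a k) = evenProd (f ∘ a) k := by
  simp [evenProd, map_list_prod]

theorem map_oddProd {N : Type*} [Monoid N] (f : M →* N) (a : ℕ → M) (k : ℕ) :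
    f (oddProd a k) = oddProd (f ∘ a) k := by
  simp [oddProd, map_list_prod]

end EvenOddProducts

section Solutions

variable {G : Type*} [Group G]

def headSolution (b : ℕ → G) (k : ℕ) : G := evenProd b k * (oddProd b k)⁻¹

def lastSolution (a : ℕ → G) (k : ℕ) : G :=
  if Even k then (evenProd a k)⁻¹ * oddProd a k else (oddProd a k)⁻¹ * evenProd a k

theorem oddProd_eq_evenProd_succ_iff_head (a : ℕ → G) (k : ℕ) :
    oddProd a (k + 1) = evenProd a (k + 1) ↔ a 0 = headSolution (fun j => a (j + 1)) k := by
  rw [oddProd_succ, evenProd_succ, headSolution, eq_mul_inv_iff_mul_eq, eq_comm]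

theorem oddProd_eq_evenProd_succ_iff_last (a : ℕ → G) (k : ℕ) :
    oddProd a (k + 1) = evenProd a (k + 1) ↔ a k = lastSolution a k := by
  rcases Nat.even_or_odd k with hk | hk
  · rw [oddProd_succ_of_even hk, evenProd_succ_of_even hk, lastSolution, if_pos hk,
      eq_inv_mul_iff_mul_eq, eq_comm]
  · rw [oddProd_succ_of_odd hk, evenProd_succ_of_odd hk, lastSolution,
      if_neg (Nat.not_even_iff_odd.2 hk), eq_inv_mul_iff_mul_eq]

theorem map_headSolution {H : Type*} [Group H] (f : G →* H) (b : ℕ → G) (k : ℕ) :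
    f (headSolution b k) = headSolution (f ∘ b) k := by
  simp [headSolution, map_evenProd, map_oddProd]

theorem map_lastSolution {H : Type*} [Group H] (f : G →* H) (a : ℕ → G) (k : ℕ) :
    f (lastSolution a k) = lastSolution (f ∘ a) k := by
  unfold lastSolution
  split_ifs <;> simp [map_evenProd, map_oddProd]

theorem headSolution_congr {a b : ℕ → G} {k : ℕ} (h : ∀ j < k, a j = b j) :
    headSolution a k = headSolution b k := by
  rw [headSolution, headSolution, evenProd_congr h, oddProd_congr h]

theorem lastSolution_congr {a b : ℕ → G} {k : ℕ} (h : ∀ j < k, a j = b j) :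
    lastSolution a k = lastSolution b k := by
  rw [lastSolution, lastSolution, evenProd_congr h, oddProd_congr h]

end Solutions

section Conjugates

variable {G : Type*} [Group G]

def conjSeq (x u : G) (j : ℕ) : G := x ^ j * u * (x ^ j)⁻¹

theorem conjSeq_zero (x u : G) : conjSeq x u 0 = u := by simp [conjSeq]

theorem conjSeq_succ (x u : G) (j : ℕ) : conjSeq x u (j + 1) = x * conjSeq x u j * x⁻¹ := by
  simp [conjSeq, pow_succ', mul_assoc]

theorem map_conjSeq {H : Type*} [Group H] (f : G →* H) (x u : G) (j : ℕ) :
    f (conjSeq x u j) = conjSeq (f x) (f u) j := by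
  simp [conjSeq]

theorem altProd_eq_conjSeq (x u : G) (k : ℕ) :
    altProd x (u * x) k = oddProd (conjSeq x u) k * x ^ k ∧
      altProd (u * x) x k = evenProd (conjSeq x u) k * x ^ k := by
  have shift : ⇑(MulAut.conj x) ∘ conjSeq x u = fun j => conjSeq x u (j + 1) := by
    funext j; simp [conjSeq_succ]
  induction k with
  | zero => simp [altProd, evenProd, oddProd]
  | succ k ih =>
    have hE := map_evenProd (MulAut.conj x).toMonoidHom (conjSeq x u) k
    have hO := map_oddProd (MulAut.conj x).toMonoidHom (conjSeq x u) k
    simp only [MulEquiv.coe_toMonoidHom, shift, MulAut.conj_apply] at hE hO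
    constructor
    · rw [altProd, ih.2, oddProd_succ, ← hE]
      group
    · rw [altProd, mul_assoc, ih.1, evenProd_succ, ← hO, conjSeq_zero]
      group

theorem altProd_eq_iff_oddProd_eq_evenProd (x u : G) (n : ℕ) :
    altProd x (u * x) n = altProd (u * x) x n ↔
      oddProd (conjSeq x u) n = evenProd (conjSeq x u) n := by
  rw [(altProd_eq_conjSeq x u n).1, (altProd_eq_conjSeq x u n).2, mul_left_inj]

theorem conjSeq_inr_inl {N : Type*} [Group N] {φ : G →* MulAut N} (g : G) (w : N) (j : ℕ) :
    conjSeq (SemidirectProduct.inr g : N ⋊[φ] G) (.inl w) j = .inl ((φ g ^ j) w) := by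
  induction j with
  | zero => simp [conjSeq_zero]
  | succ j ih =>
    rw [conjSeq_succ, ih, ← map_inv, ← SemidirectProduct.inl_aut, pow_succ', MulAut.mul_apply]

theorem map_zpow_apply_eq_conj {N : Type*} [Group N] (σ : MulAut N) (f : N →* G) (g : G)
    (h : ∀ w, f (σ w) = g * f w * g⁻¹) (k : ℤ) (w : N) :
    f ((σ ^ k) w) = g ^ k * f w * (g ^ k)⁻¹ := by
  induction k using Int.induction_on generalizing w with
  | zero => simp
  | succ k ih => rw [zpow_add_one, MulAut.mul_apply, ih, h, zpow_add_one]; group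
  | pred k ih =>
    have h' := h (σ⁻¹ w)
    rw [MulAut.apply_inv_self] at h'
    rw [zpow_sub_one, MulAut.mul_apply, ih, h', zpow_sub_one]
    group

end Conjugates

theorem isFreeGroup_ker_rightHom_comp {N G A : Type*} [Group N] [Group G] [Group A]
    [IsFreeGroup N] {φ : G →* MulAut N} (e : A ≃* N ⋊[φ] G) :
    IsFreeGroup (SemidirectProduct.rightHom.comp (e : A →* N ⋊[φ] G)).ker := by
  rw [MonoidHom.ker_comp_mulEquiv, ← SemidirectProduct.range_inl_eq_ker_rightHom]
  exact IsFreeGroup.ofMulEquiv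
    ((MonoidHom.ofInjective SemidirectProduct.inl_injective).trans (e.symm.subgroupMap _))

def prependSeq {α : Type*} (s : α) (a : ℕ → α) : ℕ → α
  | 0 => s
  | j + 1 => a j

namespace DihedralArtin

theorem altProd_of_eq_altProd_of (n : ℕ) :
    altProd (.of true : DihedralArtin n) (.of false) n = altProd (.of false) (.of true) n := by
  have h := PresentedGroup.mk_eq_mk_of_mul_inv_mem (Set.mem_singleton
    (altProd (FreeGroup.of true) (FreeGroup.of false) n *
      (altProd (FreeGroup.of false) (FreeGroup.of true) n)⁻¹))
  rwa [map_altProd, map_altProd] at h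

theorem oddProd_conjSeq_of_eq_evenProd (n : ℕ) :
    oddProd (conjSeq (.of true : DihedralArtin n) (.of false * (.of true)⁻¹)) n =
      evenProd (conjSeq (.of true : DihedralArtin n) (.of false * (.of true)⁻¹)) n := by
  rw [← altProd_eq_iff_oddProd_eq_evenProd, inv_mul_cancel_right]
  exact altProd_of_eq_altProd_of n

section Lift

variable {n : ℕ} {G : Type*} [Group G]

def lift (x y : G) (h : altProd x y n = altProd y x n) : DihedralArtin n →* G :=
  PresentedGroup.toGroup (f := fun b => cond b x y) <| by
    rintro r rfl
    rw [map_mul, map_inv, map_altProd, map_altProd, mul_inv_eq_one, FreeGroup.lift_apply_of,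
      FreeGroup.lift_apply_of]
    exact h

theorem lift_of_true (x y : G) (h : altProd x y n = altProd y x n) :
    lift x y h (.of true) = x :=
  PresentedGroup.toGroup.of _

theorem lift_of_false (x y : G) (h : altProd x y n = altProd y x n) :
    lift x y h (.of false) = y :=
  PresentedGroup.toGroup.of _

end Lift

/- From here on `n = m + 2`, and `FreeGroup (Fin (m + 1))` is the free group on `a₀, …, aₘ`. -/
variable (m : ℕ)

/- Beyond the basis, `basisSeq` takes the junk value `1`. -/
def basisSeq (j : ℕ) : FreeGroup (Fin (m + 1)) := if h : j < m + 1 then .of ⟨j, h⟩ else 1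

theorem basisSeq_of_lt {j : ℕ} (h : j < m + 1) : basisSeq m j = .of ⟨j, h⟩ := dif_pos h

theorem basisSeq_hom_ext {H : Type*} [Group H] {f g : FreeGroup (Fin (m + 1)) →* H}
    (h : ∀ j < m + 1, f (basisSeq m j) = g (basisSeq m j)) : f = g :=
  FreeGroup.ext_hom _ _ fun i => by simpa [basisSeq_of_lt m i.2] using h i i.2

/- `a₀, …, aₘ` followed by the value of `aₘ₊₁` forced by the relation. -/
def upSeq : ℕ → FreeGroup (Fin (m + 1)) :=
  Function.update (basisSeq m) (m + 1) (lastSolution (basisSeq m) (m + 1))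

/- The value of `a₋₁` forced by the relation, followed by `a₀, …, aₘ`. -/
def downSeq : ℕ → FreeGroup (Fin (m + 1)) :=
  prependSeq (headSolution (basisSeq m) (m + 1)) (basisSeq m)

theorem upSeq_of_lt {j : ℕ} (h : j < m + 1) : upSeq m j = basisSeq m j :=
  Function.update_of_ne (by omega) _ _

theorem oddProd_upSeq : oddProd (upSeq m) (m + 2) = evenProd (upSeq m) (m + 2) := by
  rw [oddProd_eq_evenProd_succ_iff_last, upSeq, Function.update_self]
  exact lastSolution_congr fun j hj => (upSeq_of_lt m hj).symm

theorem oddProd_downSeq : oddProd (downSeq m) (m + 2) = evenProd (downSeq m) (m + 2) :=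
  (oddProd_eq_evenProd_succ_iff_head _ _).2 rfl

def up : FreeGroup (Fin (m + 1)) →* FreeGroup (Fin (m + 1)) :=
  FreeGroup.lift fun i => upSeq m (i + 1)

def down : FreeGroup (Fin (m + 1)) →* FreeGroup (Fin (m + 1)) :=
  FreeGroup.lift fun i => downSeq m i

theorem up_basisSeq {j : ℕ} (h : j < m + 1) : up m (basisSeq m j) = upSeq m (j + 1) := by
  rw [basisSeq_of_lt m h, up, FreeGroup.lift_apply_of]

theorem down_basisSeq {j : ℕ} (h : j < m + 1) : down m (basisSeq m j) = downSeq m j := by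
  rw [basisSeq_of_lt m h, down, FreeGroup.lift_apply_of]

theorem down_comp_up : (down m).comp (up m) = MonoidHom.id _ := by
  refine basisSeq_hom_ext m fun j hj => ?_
  rw [MonoidHom.comp_apply, up_basisSeq m hj, MonoidHom.id_apply]
  by_cases hjm : j < m
  · rw [upSeq_of_lt m (by omega), down_basisSeq m (by omega)]
    rfl
  · obtain rfl : m = j := by omega
    rw [upSeq, Function.update_self, map_lastSolution,
      lastSolution_congr (a := down m ∘ basisSeq m) (b := downSeq m)
        fun j hj => down_basisSeq m hj,
      ← (oddProd_eq_evenProd_succ_iff_last _ _).1 (oddProd_downSeq m)]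
    rfl

theorem up_comp_down : (up m).comp (down m) = MonoidHom.id _ := by
  refine basisSeq_hom_ext m fun j hj => ?_
  rw [MonoidHom.comp_apply, down_basisSeq m hj, MonoidHom.id_apply]
  cases j with
  | zero =>
    rw [downSeq, prependSeq, map_headSolution,
      headSolution_congr (a := up m ∘ basisSeq m) (b := fun j => upSeq m (j + 1))
        fun j hj => up_basisSeq m hj,
      ← (oddProd_eq_evenProd_succ_iff_head _ _).1 (oddProd_upSeq m), upSeq_of_lt m hj]
  | succ j =>
    rw [downSeq, prependSeq, up_basisSeq m (by omega), upSeq_of_lt m hj]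

def shiftAut : MulAut (FreeGroup (Fin (m + 1))) :=
  MonoidHom.toMulEquiv (up m) (down m) (down_comp_up m) (up_comp_down m)

theorem shiftAut_pow_basisSeq_zero {j : ℕ} (hj : j < m + 2) :
    (shiftAut m ^ j) (basisSeq m 0) = upSeq m j := by
  induction j with
  | zero => exact (upSeq_of_lt m m.succ_pos).symm
  | succ j ih =>
    rw [pow_succ', MulAut.mul_apply, ih (by omega), upSeq_of_lt m (j := j) (by omega)]
    exact up_basisSeq m (by omega)

section BasisLift

variable {H : Type*} [Group H] (x u : H)

def basisLift : FreeGroup (Fin (m + 1)) →* H := FreeGroup.lift fun i => conjSeq x u i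

theorem basisLift_basisSeq {j : ℕ} (hj : j < m + 1) :
    basisLift m x u (basisSeq m j) = conjSeq x u j := by
  rw [basisSeq_of_lt m hj, basisLift, FreeGroup.lift_apply_of]

variable {x u}

theorem basisLift_upSeq (hxu : oddProd (conjSeq x u) (m + 2) = evenProd (conjSeq x u) (m + 2))
    {j : ℕ} (hj : j < m + 2) : basisLift m x u (upSeq m j) = conjSeq x u j := by
  by_cases hjm : j < m + 1
  · rw [upSeq_of_lt m hjm, basisLift_basisSeq m x u hjm]
  · obtain rfl : j = m + 1 := by omega
    rw [upSeq, Function.update_self, map_lastSolution,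
      lastSolution_congr (a := basisLift m x u ∘ basisSeq m) (b := conjSeq x u)
        fun j hj => basisLift_basisSeq m x u hj,
      ← (oddProd_eq_evenProd_succ_iff_last _ _).1 hxu]

theorem basisLift_shiftAut (hxu : oddProd (conjSeq x u) (m + 2) = evenProd (conjSeq x u) (m + 2))
    (w : FreeGroup (Fin (m + 1))) :
    basisLift m x u (shiftAut m w) = x * basisLift m x u w * x⁻¹ := by
  suffices (basisLift m x u).comp (up m) = (MulAut.conj x).toMonoidHom.comp (basisLift m x u) from
    DFunLike.congr_fun this w
  refine basisSeq_hom_ext m fun j hj => ?_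
  simp only [MonoidHom.comp_apply, up_basisSeq m hj,
    basisLift_upSeq m hxu (by omega : j + 1 < m + 2), basisLift_basisSeq m x u hj, conjSeq_succ,
    MulEquiv.coe_toMonoidHom, MulAut.conj_apply]

end BasisLift

open SemidirectProduct Multiplicative

abbrev Model : Type := FreeGroup (Fin (m + 1)) ⋊[zpowersHom _ (shiftAut m)] Multiplicative ℤ

theorem conjSeq_model {j : ℕ} (hj : j < m + 2) :
    conjSeq (inr (ofAdd 1) : Model m) (inl (basisSeq m 0)) j = inl (upSeq m j) := by
  rw [conjSeq_inr_inl, zpowersHom_apply, toAdd_ofAdd, zpow_one, shiftAut_pow_basisSeq_zero m hj]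

def toModel : DihedralArtin (m + 2) →* Model m :=
  lift (inr (ofAdd 1)) (inl (basisSeq m 0) * inr (ofAdd 1)) <| by
    rw [altProd_eq_iff_oddProd_eq_evenProd,
      oddProd_congr (b := inl ∘ upSeq m) fun j hj => conjSeq_model m hj,
      evenProd_congr (b := inl ∘ upSeq m) fun j hj => conjSeq_model m hj,
      ← map_oddProd, ← map_evenProd, oddProd_upSeq]

def ofModel : Model m →* DihedralArtin (m + 2) :=
  SemidirectProduct.lift (basisLift m (.of true) (.of false * (.of true)⁻¹))
    (zpowersHom _ (.of true)) fun z => MonoidHom.ext fun w => by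
      simp only [MonoidHom.comp_apply, MulEquiv.coe_toMonoidHom, MulAut.conj_apply,
        zpowersHom_apply]
      exact map_zpow_apply_eq_conj _ _ _
        (basisLift_shiftAut m (oddProd_conjSeq_of_eq_evenProd _)) _ w

theorem ofModel_comp_toModel : (ofModel m).comp (toModel m) = MonoidHom.id _ := by
  refine PresentedGroup.ext fun b => ?_
  cases b
  · simp [toModel, ofModel, lift_of_false, basisLift_basisSeq, conjSeq_zero]
  · simp [toModel, ofModel, lift_of_true]

theorem toModel_comp_ofModel : (toModel m).comp (ofModel m) = MonoidHom.id _ := by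
  refine SemidirectProduct.hom_ext (basisSeq_hom_ext m fun j hj => ?_) (MonoidHom.ext_mint ?_)
  · simp [ofModel, toModel, basisLift_basisSeq m _ _ hj, map_conjSeq, lift_of_false,
      lift_of_true, conjSeq_model m (by omega : j < m + 2), upSeq_of_lt m hj]
  · simp [ofModel, toModel, lift_of_true]

def modelEquiv : DihedralArtin (m + 2) ≃* Model m :=
  MonoidHom.toMulEquiv _ _ (ofModel_comp_toModel m) (toModel_comp_ofModel m)

theorem eq_rightHom_comp_modelEquiv (χ : DihedralArtin (m + 2) →* Multiplicative ℤ)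
    (hx : χ (.of true) = ofAdd 1) (hy : χ (.of false) = ofAdd 1) :
    χ = rightHom.comp (modelEquiv m : DihedralArtin (m + 2) →* Model m) := by
  refine PresentedGroup.ext fun b => ?_
  cases b
  · simp [modelEquiv, toModel, lift_of_false, hy]
  · simp [modelEquiv, toModel, lift_of_true, hx]

end DihedralArtin

/-- For the dihedral Artin group with label `n ≥ 2`, the homomorphism
`χ : A_(I_n) → ℤ` sending both generators to `1 ∈ ℤ` is surjective and its
kernel is a free group. -/
theorem dihedralArtin_to_int_surjective_and_ker_free (n : ℕ) (hn : 2 ≤ n)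
    (χ : DihedralArtin n →* Multiplicative ℤ)
    (hx : χ (PresentedGroup.of true) = Multiplicative.ofAdd 1)
    (hy : χ (PresentedGroup.of false) = Multiplicative.ofAdd 1) :
    Function.Surjective χ ∧ IsFreeGroup χ.ker := by
  refine ⟨fun z => ⟨.of true ^ z.toAdd, by simp [hx, ← ofAdd_zsmul]⟩, ?_⟩
  obtain ⟨m, rfl⟩ : ∃ m, n = m + 2 := ⟨n - 2, by omega⟩
  rw [DihedralArtin.eq_rightHom_comp_modelEquiv m χ hx hy]
  exact isFreeGroup_ker_rightHom_comp _
end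

section
/- In the Baumslag–Solitar group BS(n,n) = ⟨a, t ∣ t a^n t^{-1} = a^n⟩ with n ≥ 1, the kernel of the homomorphism to ℤ² sending a and t to the two standard generators is a free group. -/
/-- The Baumslag–Solitar group `BS(n,n) = ⟨a, t ∣ t * a^n * t⁻¹ * (a^n)⁻¹⟩`,
with `a = FreeGroup.of false`, `t = FreeGroup.of true`. -/
abbrev BaumslagSolitarNN (n : ℕ) : Type :=
  PresentedGroup
    ({FreeGroup.of true * (FreeGroup.of false) ^ n * (FreeGroup.of true)⁻¹ *
        ((FreeGroup.of false) ^ n)⁻¹} : Set (FreeGroup Bool))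

namespace BSNNProof

variable (n : ℕ)

/-- The relator set of `BS(n,n)`. -/
abbrev relsG : Set (FreeGroup Bool) :=
  {FreeGroup.of true * (FreeGroup.of false) ^ n * (FreeGroup.of true)⁻¹ *
      ((FreeGroup.of false) ^ n)⁻¹}

/-- The group `Q = ⟨a, t ∣ aⁿ⟩ = ℤ/n * ℤ`. -/
abbrev Q : Type := PresentedGroup ({(FreeGroup.of false) ^ n} : Set (FreeGroup Bool))

abbrev aQ : Q n := PresentedGroup.of false
abbrev tQ : Q n := PresentedGroup.of true

theorem aQ_pow_n : (aQ n) ^ n = 1 := by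
  show ((PresentedGroup.mk _ (FreeGroup.of false) : Q n)) ^ n = 1
  rw [← map_pow]
  exact (QuotientGroup.eq_one_iff _).2
    (Subgroup.subset_normalClosure (Set.mem_singleton _))

theorem aQ_pow_mod (m : ℕ) : (aQ n) ^ (m % n) = (aQ n) ^ m :=
  (pow_eq_pow_mod m (aQ_pow_n n)).symm

/-- The cyclic-shift action of `ZMod n` on `FreeGroup (ZMod n)`. -/
def σ : Multiplicative (ZMod n) →* MulAut (FreeGroup (ZMod n)) :=
  MonoidHom.mk' (fun c => FreeGroup.freeGroupCongr (Equiv.addLeft c.toAdd))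
    (by
      intro c d
      show FreeGroup.freeGroupCongr _ =
        (FreeGroup.freeGroupCongr _).trans (FreeGroup.freeGroupCongr _)
      rw [FreeGroup.freeGroupCongr_trans]
      congr 1
      ext x
      show c.toAdd + d.toAdd + x = c.toAdd + (d.toAdd + x)
      rw [add_assoc])

/-- The semidirect product `F(ZMod n) ⋊ ZMod n ≅ ℤ/n * ℤ`. -/
abbrev SP : Type := SemidirectProduct (FreeGroup (ZMod n)) (Multiplicative (ZMod n)) (σ n)

open SemidirectProduct

/-- Images of the generators in `SP`. -/
def Fgen : Bool → SP n := fun b =>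
  if b then inl (FreeGroup.of 0) else inr (Multiplicative.ofAdd 1)

theorem Fgen_pow_n : (Fgen n false) ^ n = 1 := by
  show (inr (Multiplicative.ofAdd (1 : ZMod n))) ^ n = 1
  rw [← map_pow]
  have : (Multiplicative.ofAdd (1 : ZMod n)) ^ n = 1 := by
    rw [← ofAdd_nsmul]
    norm_num
  rw [this, map_one]

/-- The homomorphism `ι : Q → SP`. -/
def ι : Q n →* SP n :=
  PresentedGroup.toGroup (f := Fgen n) (by
    intro r hr
    rw [Set.mem_singleton_iff] at hr
    subst hr
    rw [map_pow, FreeGroup.lift_apply_of, Fgen_pow_n])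

/-- The map `π : BS(n,n) → Q` killing `aⁿ`. -/
def π : BaumslagSolitarNN n →* Q n :=
  PresentedGroup.toGroup (f := fun b => (PresentedGroup.of b : Q n)) (by
    intro r hr
    rw [Set.mem_singleton_iff] at hr
    subst hr
    simp only [map_mul, map_pow, map_inv, FreeGroup.lift_apply_of]
    rw [aQ_pow_n]
    simp)

variable [NeZero n]

/-- The retraction `j : SP → Q`, proving `ι` injective. -/
def φj : FreeGroup (ZMod n) →* Q n :=
  FreeGroup.lift (fun i => (aQ n) ^ i.val * tQ n * ((aQ n) ^ i.val)⁻¹)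

def ψj : Multiplicative (ZMod n) →* Q n :=
  MonoidHom.mk' (fun c => (aQ n) ^ c.toAdd.val) (by
    intro c d
    show (aQ n) ^ (c.toAdd + d.toAdd).val = _
    rw [ZMod.val_add, aQ_pow_mod, pow_add])

theorem hj : ∀ g, (φj n).comp ((σ n) g).toMonoidHom =
    (MulAut.conj (ψj n g)).toMonoidHom.comp (φj n) := by
  intro g
  apply FreeGroup.ext_hom
  intro i
  show φj n (FreeGroup.of (g.toAdd + i)) = ψj n g * φj n (FreeGroup.of i) * (ψj n g)⁻¹
  simp only [φj, ψj, FreeGroup.lift_apply_of, MonoidHom.mk'_apply]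
  rw [show ((g.toAdd + i : ZMod n).val) = (g.toAdd.val + i.val) % n from ZMod.val_add _ _,
    aQ_pow_mod, pow_add]
  group

def j : SP n →* Q n := SemidirectProduct.lift (φj n) (ψj n) (hj n)

theorem j_comp_ι : (j n).comp (ι n) = MonoidHom.id (Q n) := by
  apply PresentedGroup.ext
  intro x
  rw [MonoidHom.comp_apply, MonoidHom.id_apply,
    show (ι n) (PresentedGroup.of x) = Fgen n x from PresentedGroup.toGroup.of _]
  cases x with
  | false =>
      show j n (inr (Multiplicative.ofAdd 1)) = aQ n
      rw [j, SemidirectProduct.lift_inr]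
      show (aQ n) ^ (1 : ZMod n).val = aQ n
      have : (1 : ZMod n).val = 1 % n := by
        rcases n with _ | m
        · simp at *
        · exact ZMod.val_one_eq_one_mod _
      rw [this, aQ_pow_mod, pow_one]
  | true =>
      show j n (inl (FreeGroup.of 0)) = tQ n
      rw [j, SemidirectProduct.lift_inl, φj, FreeGroup.lift_apply_of]
      simp

theorem ι_injective : Function.Injective (ι n) := by
  have h : Function.LeftInverse (j n) (ι n) := fun x =>
    DFunLike.congr_fun (j_comp_ι n) x
  exact h.injective

abbrev aG : BaumslagSolitarNN n := PresentedGroup.of false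
abbrev tG : BaumslagSolitarNN n := PresentedGroup.of true

theorem relG_one : tG n * (aG n) ^ n * (tG n)⁻¹ * ((aG n) ^ n)⁻¹ = 1 := by
  show (PresentedGroup.mk (relsG n) (FreeGroup.of true)) * _ * _ * _ = 1
  rw [show (aG n) ^ n = PresentedGroup.mk (relsG n) ((FreeGroup.of false) ^ n) by
    rw [map_pow]; rfl]
  rw [show (tG n)⁻¹ = PresentedGroup.mk (relsG n) (FreeGroup.of true)⁻¹ by
    rw [map_inv]; rfl]
  rw [← map_inv, ← map_mul, ← map_mul, ← map_mul]
  exact (QuotientGroup.eq_one_iff _).2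
    (Subgroup.subset_normalClosure (Set.mem_singleton _))

theorem aGn_central : (aG n) ^ n ∈ Subgroup.center (BaumslagSolitarNN n) := by
  rw [Subgroup.mem_center_iff]
  intro g
  have hg : g ∈ Subgroup.centralizer {(aG n) ^ n} := by
    apply PresentedGroup.generated_by
    intro b
    rw [Subgroup.mem_centralizer_iff]
    intro h hh
    rw [Set.mem_singleton_iff] at hh
    subst hh
    cases b with
    | false => exact (Commute.pow_self (aG n) n).eq
    | true =>
        have := relG_one n
        have h2 : tG n * (aG n) ^ n * (tG n)⁻¹ = (aG n) ^ n := by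
          have := mul_eq_one_iff_eq_inv.1 this
          rw [this]; group
        calc (aG n) ^ n * tG n = (tG n * (aG n) ^ n * (tG n)⁻¹) * tG n := by rw [h2]
          _ = tG n * (aG n) ^ n := by group
  exact (Subgroup.mem_centralizer_iff.1 hg _ (Set.mem_singleton _)).symm

theorem ker_π (g : BaumslagSolitarNN n) (h : π n g = 1) :
    g ∈ Subgroup.zpowers ((aG n) ^ n) := by
  obtain ⟨w, rfl⟩ := PresentedGroup.mk_surjective (relsG n) g
  have hπmk : (π n).comp (PresentedGroup.mk (relsG n)) =
      PresentedGroup.mk ({(FreeGroup.of false) ^ n} : Set (FreeGroup Bool)) := by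
    apply FreeGroup.ext_hom
    intro b
    show π n (PresentedGroup.of b) = PresentedGroup.of b
    simp [π, PresentedGroup.toGroup.of]
  have hw : w ∈ Subgroup.normalClosure ({(FreeGroup.of false) ^ n} : Set (FreeGroup Bool)) := by
    have h2 : (PresentedGroup.mk ({(FreeGroup.of false) ^ n} : Set (FreeGroup Bool)) w) = 1 := by
      have h3 := DFunLike.congr_fun hπmk w
      rw [MonoidHom.comp_apply] at h3
      rw [← h3]
      exact h
    exact (QuotientGroup.eq_one_iff _).1 h2
  have hmap : PresentedGroup.mk (relsG n) w ∈
      Subgroup.map (PresentedGroup.mk (relsG n))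
        (Subgroup.normalClosure ({(FreeGroup.of false) ^ n} : Set (FreeGroup Bool))) :=
    ⟨w, hw, rfl⟩
  rw [Subgroup.map_normalClosure _ _ (PresentedGroup.mk_surjective _)] at hmap
  have himg : (PresentedGroup.mk (relsG n)) ''
      ({(FreeGroup.of false) ^ n} : Set (FreeGroup Bool)) = {(aG n) ^ n} := by
    rw [Set.image_singleton, map_pow]; rfl
  rw [himg] at hmap
  haveI : (Subgroup.zpowers ((aG n) ^ n)).Normal := by
    constructor
    intro x hx g
    obtain ⟨k, rfl⟩ := hx
    have hc : Commute g ((aG n) ^ n) :=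
      Subgroup.mem_center_iff.1 (aGn_central n) g
    have hck : g * ((aG n) ^ n) ^ k * g⁻¹ = ((aG n) ^ n) ^ k := by
      rw [(hc.zpow_right k).eq]; group
    rw [hck]
    exact Subgroup.zpow_mem _ (Subgroup.mem_zpowers _) k
  exact Subgroup.normalClosure_le_normal (by simp [Subgroup.mem_zpowers]) hmap

def Φ : BaumslagSolitarNN n →* SP n := (ι n).comp (π n)

theorem Φ_of (b : Bool) : Φ n (PresentedGroup.of b) = Fgen n b := by
  show (ι n) ((π n) (PresentedGroup.of b)) = _
  rw [show (π n) (PresentedGroup.of b) = (PresentedGroup.of b : Q n) from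
      PresentedGroup.toGroup.of _]
  exact PresentedGroup.toGroup.of _

theorem key_inj (g : BaumslagSolitarNN n)
    (f : BaumslagSolitarNN n →* Multiplicative (ℤ × ℤ))
    (ha : f (PresentedGroup.of false) = Multiplicative.ofAdd (1, 0))
    (h1 : ι n (π n g) = 1) (h2 : f g = 1) : g = 1 := by
  have hπ : π n g = 1 := by
    apply ι_injective n
    rw [h1, map_one]
  obtain ⟨m, hm⟩ := ker_π n g hπ
  have hm' : ((aG n) ^ n) ^ m = g := hm
  rw [← hm'] at h2 ⊢
  have hz : (((aG n) ^ n) ^ m) = (aG n) ^ ((n : ℤ) * m) := by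
    rw [zpow_mul, zpow_natCast]
  rw [hz] at h2 ⊢
  rw [map_zpow, ha, ← ofAdd_zsmul] at h2
  have h3 : ((n : ℤ) * m) • ((1 : ℤ), (0 : ℤ)) = 0 := by
    rwa [← ofAdd_zero, Multiplicative.ofAdd.apply_eq_iff_eq] at h2
  have h4 : (n : ℤ) * m = 0 := by
    have := congrArg Prod.fst h3
    simpa using this
  rw [h4, zpow_zero]

end BSNNProof

/-- In the Baumslag–Solitar group `BS(n,n) = ⟨a, t ∣ t aⁿ t⁻¹ = aⁿ⟩` with `n ≥ 1`,
the kernel of the homomorphism to `ℤ²` sending `a` and `t` to the two standard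
generators is a free group. -/
theorem baumslagSolitarNN_ker_abelianization_free (n : ℕ) (hn : 1 ≤ n)
    (f : BaumslagSolitarNN n →* Multiplicative (ℤ × ℤ))
    (ha : f (PresentedGroup.of false) = Multiplicative.ofAdd (1, 0))
    (ht : f (PresentedGroup.of true) = Multiplicative.ofAdd (0, 1)) :
    IsFreeGroup f.ker := by
  haveI : NeZero n := ⟨Nat.one_le_iff_ne_zero.mp hn⟩
  let μ : Multiplicative (ℤ × ℤ) →* Multiplicative (ZMod n) :=
    AddMonoidHom.toMultiplicative ((Int.castAddHom (ZMod n)).comp (AddMonoidHom.fst ℤ ℤ))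
  have hcomm : (SemidirectProduct.rightHom).comp (BSNNProof.Φ n) = μ.comp f := by
    apply PresentedGroup.ext
    intro x
    simp only [MonoidHom.comp_apply]
    rw [BSNNProof.Φ_of n x]
    cases x with
    | false =>
        rw [ha]
        show SemidirectProduct.rightHom
            (SemidirectProduct.inr (Multiplicative.ofAdd (1 : ZMod n))) = _
        rw [SemidirectProduct.rightHom_inr]
        show Multiplicative.ofAdd (1 : ZMod n) = Multiplicative.ofAdd (((1 : ℤ) : ZMod n))
        norm_num
    | true =>
        rw [ht]
        show SemidirectProduct.rightHom
            (SemidirectProduct.inl (φ := BSNNProof.σ n) (FreeGroup.of 0)) = _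
        rw [SemidirectProduct.rightHom_inl]
        show 1 = Multiplicative.ofAdd (((0 : ℤ) : ZMod n))
        norm_num
  have hmem : ∀ k : f.ker, ((BSNNProof.Φ n).comp f.ker.subtype) k ∈
      (SemidirectProduct.inl (φ := BSNNProof.σ n)).range := by
    intro k
    rw [SemidirectProduct.range_inl_eq_ker_rightHom, MonoidHom.mem_ker]
    have h1 := DFunLike.congr_fun hcomm k.1
    simp only [MonoidHom.comp_apply] at h1
    have hfk : f k.1 = 1 := k.2
    show SemidirectProduct.rightHom ((BSNNProof.Φ n) k.1) = 1
    rw [h1, hfk, map_one]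
  let e := MonoidHom.ofInjective
    (SemidirectProduct.inl_injective (φ := BSNNProof.σ n))
  let Θ : f.ker →* FreeGroup (ZMod n) :=
    e.symm.toMonoidHom.comp (((BSNNProof.Φ n).comp f.ker.subtype).codRestrict _ hmem)
  have hΘinj : Function.Injective Θ := by
    rw [injective_iff_map_eq_one]
    intro k hk
    have hk' : e.symm ((((BSNNProof.Φ n).comp f.ker.subtype).codRestrict _ hmem) k) = 1 := hk
    have h1 : (((BSNNProof.Φ n).comp f.ker.subtype).codRestrict _ hmem) k = 1 := by
      have h0 := (MulEquiv.symm_apply_eq e).1 hk'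
      rwa [map_one] at h0
    have h2 : BSNNProof.Φ n k.1 = 1 := by
      have := congrArg (Subtype.val) h1
      simpa using this
    have h3 : (k : BaumslagSolitarNN n) = 1 :=
      BSNNProof.key_inj n k.1 f ha h2 k.2
    exact Subtype.ext h3
  exact IsFreeGroup.ofMulEquiv (MonoidHom.ofInjective hΘinj).symm
end

section
/- Let G = ℤ² ⋊_f ℤ where f is the automorphism of ℤ² given by the matrix [[2,5],[1,3]]. Then G is poly-free but G is not normally poly-free. -/
universe u v

/-- The automorphism of `ℤ²` given by the matrix `[[2,5],[1,3]]`. -/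
def matAut : (ℤ × ℤ) ≃+ (ℤ × ℤ) where
  toFun p := (2 * p.1 + 5 * p.2, p.1 + 3 * p.2)
  invFun p := (3 * p.1 - 5 * p.2, -p.1 + 2 * p.2)
  left_inv p := by
    obtain ⟨a, b⟩ := p
    simp only [Prod.mk.injEq]
    constructor <;> ring
  right_inv p := by
    obtain ⟨a, b⟩ := p
    simp only [Prod.mk.injEq]
    constructor <;> ring
  map_add' p q := by
    obtain ⟨a, b⟩ := p
    obtain ⟨c, d⟩ := q
    simp only [Prod.mk_add_mk, Prod.mk.injEq]
    constructor <;> ring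

/-- The action of `ℤ` on `ℤ²` generated by `matAut`. -/
def matAction : Multiplicative ℤ →* MulAut (Multiplicative (ℤ × ℤ)) :=
  zpowersHom _ (AddEquiv.toMultiplicative matAut)

/-! The chain `1 ⊴ ℤ ⊴ ℤ² ⊴ G` has free quotients, so `G` is poly-free. For the other half let
`Λ = ℤ²`, the kernel of `G → ℤ`. As `det (f - 1) = -3 ≠ 0`, every homomorphism `G → ℤ` kills `Λ`,
so a free quotient of `G` has rank at most one and its kernel is `G` or `Λ`. A free quotient of the
abelian group `Λ` by a subgroup normal in `G` is trivial: a surjection `Λ → ℤ` with `f`-invariant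
kernel would make `f` have a rational eigenvector, but the characteristic polynomial `x² - 5x + 1`
of `f` has discriminant `21`. So the terms of a normal chain with free quotients, read downwards
from `G`, all lie in `{G, Λ}`, and the chain never reaches `1`. -/

open Function Multiplicative SemidirectProduct

namespace IsFreeGroup

variable {F : Type*} [Group F] [IsFreeGroup F]

lemma subsingleton_generators_of_commute (hF : ∀ a b : F, a * b = b * a) :
    Subsingleton (Generators F) := by
  classical
  refine ⟨fun x y => by_contra fun hxy => ?_⟩
  let σ : F →* Equiv.Perm (Fin 3) :=
    lift fun s => if s = x then Equiv.swap 0 1 else Equiv.swap 1 2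
  have h := congrArg σ (hF (of x) (of y))
  simp only [map_mul, σ, lift_of, if_neg (Ne.symm hxy)] at h
  exact absurd h (by decide)

lemma subsingleton_generators_of_surjective_of_eq_zpow {H : Type*} [Group H]
    (ρ : H →* Multiplicative ℤ) (hρ : ∀ φ : H →* Multiplicative ℤ, ∃ c : ℤ, ∀ h, φ h = ρ h ^ c)
    {f : H →* F} (hf : Surjective f) : Subsingleton (Generators F) := by
  classical
  refine ⟨fun x y => by_contra fun hxy => ?_⟩
  let χ (s : Generators F) : F →* Multiplicative ℤ := lift (Pi.mulSingle s (ofAdd 1))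
  obtain ⟨a, ha⟩ := hρ ((χ x).comp f)
  obtain ⟨b, hb⟩ := hρ ((χ y).comp f)
  obtain ⟨gx, hgx⟩ := hf (of x)
  obtain ⟨gy, hgy⟩ := hf (of y)
  have hxx : ρ gx ^ a = ofAdd 1 := by rw [← ha]; simp [χ, hgx]
  have hyx : ρ gx ^ b = 1 := by rw [← hb]; simp [χ, hgx, hxy]
  have hyy : ρ gy ^ b = ofAdd 1 := by rw [← hb]; simp [χ, hgy]
  have hne : ρ gx ≠ 1 := by rintro h; rw [h, one_zpow] at hxx; exact absurd hxx (by decide)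
  rw [(IsMulTorsionFree.zpow_eq_one_iff_right hne).1 hyx, zpow_zero] at hyy
  exact absurd hyy (by decide)

lemma subsingleton_or_nonempty_mulEquiv_int [Subsingleton (Generators F)] :
    Subsingleton F ∨ Nonempty (F ≃* Multiplicative ℤ) := by
  cases isEmpty_or_nonempty (Generators F) with
  | inl _ => exact .inl (toFreeGroup F).toEquiv.subsingleton
  | inr h =>
    have : Unique (Generators F) := uniqueOfSubsingleton h.some
    exact .inr ⟨(toFreeGroup F).trans FreeGroup.mulEquivIntOfUnique⟩

end IsFreeGroup

instance : IsFreeGroup (Multiplicative ℤ) :=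
  .ofMulEquiv (FreeGroup.mulEquivIntOfUnique (α := Unit))

lemma IsPolyFreeOfLen.of_mulEquiv : ∀ {n : ℕ} {G H : Type u} [Group G] [Group H],
    G ≃* H → IsPolyFreeOfLen n G → IsPolyFreeOfLen n H
  | 0, _, _, _, _, e, h => @Equiv.subsingleton.symm _ _ e.toEquiv h
  | _ + 1, _, _, _, _, e, ⟨N, _, hNn, _⟩ =>
    have : (N.map e.toMonoidHom).Normal := .map inferInstance _ e.surjective
    ⟨N.map e.toMonoidHom, this, hNn.of_mulEquiv (e.subgroupMap N),
      .ofMulEquiv (QuotientGroup.congr N _ e rfl)⟩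

section PolyFree

variable {G : Type u} [Group G]

lemma isPolyFreeOfLen_succ_of_surjective {n : ℕ} {F : Type u} [Group F] [IsFreeGroup F]
    (f : G →* F) (hf : Surjective f) (hker : IsPolyFreeOfLen n f.ker) :
    IsPolyFreeOfLen (n + 1) G :=
  ⟨f.ker, inferInstance, hker, .ofMulEquiv (QuotientGroup.quotientKerEquivOfSurjective f hf).symm⟩

lemma isPolyFreeOfLen_one [IsFreeGroup G] : IsPolyFreeOfLen 1 G :=
  ⟨⊥, inferInstance, inferInstanceAs (Subsingleton (⊥ : Subgroup G)),
    .ofMulEquiv QuotientGroup.quotientBot.symm⟩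

lemma not_isNormallyPolyFree_of_forall_freeQuotient (P : Subgroup G → Prop) (htop : P ⊤)
    (hbot : ¬ P ⊥)
    (hstep : ∀ M N : Subgroup G, P M → N.Normal → N ≤ M →
      ∀ (F : Type u) [Group F] [IsFreeGroup F] (f : M →* F),
        Surjective f → f.ker = N.subgroupOf M → P N) :
    ¬ IsNormallyPolyFree G := by
  rintro ⟨n, c, hc₀, hcn, hmono, hnormal, hfree⟩
  have hP : ∀ i, P (c i) := Fin.reverseInduction (hcn ▸ htop) fun i hi => by
    obtain ⟨F, _, f, _, hf, hker⟩ := hfree i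
    exact hstep _ _ hi (hnormal _) (hmono i) F f hf hker
  exact hbot (hc₀ ▸ hP 0)

end PolyFree

noncomputable def SemidirectProduct.inlEquivKerRightHom {N M : Type*} [Group N] [Group M]
    {φ : M →* MulAut N} : N ≃* (rightHom : N ⋊[φ] M →* M).ker :=
  (MonoidHom.ofInjective inl_injective).trans (MulEquiv.subgroupCongr range_inl_eq_ker_rightHom)

lemma SemidirectProduct.isPolyFreeOfLen_succ {N M : Type u} [Group N] [Group M] [IsFreeGroup M]
    {φ : M →* MulAut N} {n : ℕ} (h : IsPolyFreeOfLen n N) : IsPolyFreeOfLen (n + 1) (N ⋊[φ] M) :=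
  isPolyFreeOfLen_succ_of_surjective rightHom rightHom_surjective
    (h.of_mulEquiv inlEquivKerRightHom)

lemma isPolyFreeOfLen_two_int_prod : IsPolyFreeOfLen 2 (Multiplicative (ℤ × ℤ)) :=
  (SemidirectProduct.isPolyFreeOfLen_succ (φ := 1) isPolyFreeOfLen_one).of_mulEquiv
    ((MulEquiv.prodMultiplicative ℤ ℤ).trans mulEquivProd.symm).symm

lemma AddMonoidHom.apply_int_prod (ψ : ℤ × ℤ →+ ℤ) (a b : ℤ) :
    ψ (a, b) = a * ψ (1, 0) + b * ψ (0, 1) := by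
  rw [show (a, b) = a • ((1 : ℤ), (0 : ℤ)) + b • ((0 : ℤ), (1 : ℤ)) by simp, map_add, map_zsmul,
    map_zsmul, smul_eq_mul, smul_eq_mul]

lemma eq_zero_of_sq_sub_mul_sub_five_mul_sq {p q : ℤ} (h : q ^ 2 - p * q - 5 * p ^ 2 = 0) :
    p = 0 := by
  by_contra hp
  have hℚ : (q : ℚ) ^ 2 - p * q - 5 * p ^ 2 = 0 := by exact_mod_cast h
  have : IsSquare (21 : ℚ) := ⟨(2 * q - p) / p, by
    field_simp
    linear_combination (-4 : ℚ) * hℚ⟩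
  norm_num at this

local notation "Γ" => SemidirectProduct (Multiplicative (ℤ × ℤ)) (Multiplicative ℤ) matAction
local notation "Λ" => MonoidHom.ker (rightHom : Γ →* Multiplicative ℤ)

namespace MatSemidirect

lemma matAut_apply (a b : ℤ) : matAut (a, b) = (2 * a + 5 * b, a + 3 * b) := rfl

lemma inl_matAut (v : ℤ × ℤ) :
    (inl (ofAdd (matAut v)) : Γ) = inr (ofAdd 1) * inl (ofAdd v) * (inr (ofAdd 1))⁻¹ := by
  rw [← map_inv]
  simpa [matAction] using inl_aut (φ := matAction) (ofAdd 1) (ofAdd v)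

lemma eq_zero_of_map_matAut_eq (ψ : ℤ × ℤ →+ ℤ) (h : ∀ v, ψ (matAut v) = ψ v) : ψ = 0 := by
  have h₁ : ψ (2, 1) = ψ (1, 0) := h (1, 0)
  have h₂ : ψ (5, 3) = ψ (0, 1) := h (0, 1)
  rw [ψ.apply_int_prod] at h₁ h₂
  refine AddMonoidHom.ext fun ⟨a, b⟩ => ?_
  rw [ψ.apply_int_prod, show ψ (1, 0) = 0 by omega, show ψ (0, 1) = 0 by omega]
  simp

lemma eq_zero_of_map_matAut_eq_zero (ψ : ℤ × ℤ →+ ℤ) (h : ∀ v, ψ v = 0 → ψ (matAut v) = 0) :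
    ψ = 0 := by
  have hψ := ψ.apply_int_prod
  generalize ψ (1, 0) = p at hψ
  generalize ψ (0, 1) = q at hψ
  -- `(q, -p)` spans `ker ψ`, so it would be an eigenvector of `matAut`.
  have hv : ψ (q, -p) = 0 := by rw [hψ]; ring
  have hfv := h _ hv
  rw [matAut_apply, hψ] at hfv
  have hp : p = 0 := eq_zero_of_sq_sub_mul_sub_five_mul_sq (q := q) (by linear_combination hfv)
  have hq : q = 0 := by simpa [hp] using hfv
  refine AddMonoidHom.ext fun ⟨a, b⟩ => ?_
  simp [hψ, hp, hq]

lemma map_inl_eq_one (φ : Γ →* Multiplicative ℤ) (v : Multiplicative (ℤ × ℤ)) :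
    φ (inl v) = 1 := by
  let ψ : ℤ × ℤ →+ ℤ := AddMonoidHom.toMultiplicative.symm (φ.comp inl)
  have hψ : ψ = 0 := eq_zero_of_map_matAut_eq ψ fun w => by
    simp [ψ, inl_matAut, mul_inv_cancel_comm]
  exact DFunLike.congr_fun hψ (toAdd v)

lemma exists_eq_zpow_rightHom (φ : Γ →* Multiplicative ℤ) :
    ∃ c : ℤ, ∀ g, φ g = rightHom g ^ c := by
  refine ⟨toAdd (φ (inr (ofAdd 1))), fun g => ?_⟩
  have hinr : φ.comp inr = zpowGroupHom (toAdd (φ (inr (ofAdd 1)))) :=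
    MonoidHom.ext_mint (by simp [← ofAdd_zsmul])
  rw [← inl_left_mul_inr_right g, map_mul, map_inl_eq_one, one_mul, ← MonoidHom.comp_apply, hinr]
  simp

lemma ker_eq_ker_rightHom_of_surjective (φ : Γ →* Multiplicative ℤ) (hφ : Surjective φ) :
    φ.ker = Λ := by
  obtain ⟨c, hc⟩ := exists_eq_zpow_rightHom φ
  have hc₀ : c ≠ 0 := by
    rintro rfl
    obtain ⟨g, hg⟩ := hφ (ofAdd 1)
    rw [hc, zpow_zero] at hg
    exact absurd hg (by decide)
  ext g
  simp [hc, IsMulTorsionFree.zpow_eq_one_iff, hc₀]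

lemma ker_eq_top_or_ker_eq_ker_rightHom {F : Type*} [Group F] [IsFreeGroup F] {f : Γ →* F}
    (hf : Surjective f) : f.ker = ⊤ ∨ f.ker = Λ := by
  have := IsFreeGroup.subsingleton_generators_of_surjective_of_eq_zpow rightHom
    exists_eq_zpow_rightHom hf
  rcases IsFreeGroup.subsingleton_or_nonempty_mulEquiv_int (F := F) with hF | ⟨⟨e⟩⟩
  · exact .inl (MonoidHom.ker_eq_top_iff.2 (MonoidHom.ext fun _ => Subsingleton.elim _ _))
  · refine .inr ?_
    rw [← ker_eq_ker_rightHom_of_surjective (e.toMonoidHom.comp f) (e.surjective.comp hf)]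
    ext
    simp

lemma not_surjective_of_ker_eq_subgroupOf (ψ : Λ →* Multiplicative ℤ) {N : Subgroup Γ}
    (hN : N.Normal) (hker : ψ.ker = N.subgroupOf Λ) : ¬ Surjective ψ := by
  intro hψ
  let χ : ℤ × ℤ →+ ℤ :=
    AddMonoidHom.toMultiplicative.symm (ψ.comp inlEquivKerRightHom.toMonoidHom)
  have hχ (v : ℤ × ℤ) : χ v = 0 ↔ (inl (ofAdd v) : Γ) ∈ N := by
    change toAdd (ψ _) = 0 ↔ _
    rw [toAdd_eq_zero, ← MonoidHom.mem_ker, hker, Subgroup.mem_subgroupOf]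
    rfl
  have hχ₀ : χ = 0 := eq_zero_of_map_matAut_eq_zero χ fun v hv =>
    (hχ _).2 (inl_matAut v ▸ hN.conj_mem _ ((hχ v).1 hv) _)
  obtain ⟨w, hw⟩ := (hψ.comp inlEquivKerRightHom.surjective) (ofAdd 1)
  have : ψ (inlEquivKerRightHom w) = 1 := DFunLike.congr_fun hχ₀ (toAdd w)
  rw [← Function.comp_apply (f := ψ), hw] at this
  exact absurd this (by decide)

lemma ker_eq_top_of_surjective_of_normal {F : Type*} [Group F] [IsFreeGroup F] {f : Λ →* F}
    (hf : Surjective f) {N : Subgroup Γ} (hN : N.Normal) (hker : f.ker = N.subgroupOf Λ) :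
    f.ker = ⊤ := by
  have hcomm (a b : F) : a * b = b * a := by
    have hsurj := hf.comp (inlEquivKerRightHom (φ := matAction)).surjective
    obtain ⟨u, rfl⟩ := hsurj a
    obtain ⟨v, rfl⟩ := hsurj b
    simp only [Function.comp_apply, ← map_mul, mul_comm u v]
  have := IsFreeGroup.subsingleton_generators_of_commute hcomm
  rcases IsFreeGroup.subsingleton_or_nonempty_mulEquiv_int (F := F) with hF | ⟨⟨e⟩⟩
  · exact MonoidHom.ker_eq_top_iff.2 (MonoidHom.ext fun _ => Subsingleton.elim _ _)
  · refine absurd (e.surjective.comp hf)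
      (not_surjective_of_ker_eq_subgroupOf (e.toMonoidHom.comp f) hN ?_)
    rw [← hker]
    ext
    simp

lemma eq_top_or_eq_ker_rightHom_of_freeQuotient (M N : Subgroup Γ) (hM : M = ⊤ ∨ M = Λ)
    (hN : N.Normal) (hNM : N ≤ M) {F : Type*} [Group F] [IsFreeGroup F] (f : M →* F)
    (hf : Surjective f) (hker : f.ker = N.subgroupOf M) : N = ⊤ ∨ N = Λ := by
  rcases hM with rfl | rfl
  · have hker' : (f.comp Subgroup.topEquiv.symm.toMonoidHom).ker = N := by
      ext g
      simp [hker, Subgroup.mem_subgroupOf]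
    exact hker' ▸ ker_eq_top_or_ker_eq_ker_rightHom (hf.comp Subgroup.topEquiv.symm.surjective)
  · refine .inr (le_antisymm hNM ?_)
    rw [← Subgroup.subgroupOf_eq_top, ← hker]
    exact ker_eq_top_of_surjective_of_normal hf hN hker

end MatSemidirect

/-- The group `G = ℤ² ⋊_f ℤ`, where `f` is the automorphism of `ℤ²` given by the
matrix `[[2,5],[1,3]]`, is poly-free but not normally poly-free. -/
theorem semidirect_matrix_polyFree_not_normallyPolyFree :
    IsPolyFree (SemidirectProduct (Multiplicative (ℤ × ℤ)) (Multiplicative ℤ) matAction) ∧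
    ¬ IsNormallyPolyFree
        (SemidirectProduct (Multiplicative (ℤ × ℤ)) (Multiplicative ℤ) matAction) := by
  refine ⟨⟨3, SemidirectProduct.isPolyFreeOfLen_succ isPolyFreeOfLen_two_int_prod⟩,
    not_isNormallyPolyFree_of_forall_freeQuotient (fun M => M = ⊤ ∨ M = Λ) (.inl rfl) ?_
      fun M N hM hN hNM _ _ _ f =>
        MatSemidirect.eq_top_or_eq_ker_rightHom_of_freeQuotient M N hM hN hNM f⟩
  have hx : (inl (ofAdd ((1 : ℤ), (0 : ℤ))) : Γ) ≠ 1 := by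
    simp [map_eq_one_iff _ inl_injective]
  rintro (h | h)
  · exact hx (Subgroup.mem_bot.1 (h ▸ Subgroup.mem_top _))
  · exact hx (Subgroup.mem_bot.1 (h ▸ rightHom_inl _))
end
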